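/- arXiv:1203.3415 — 9 statements merged into one kernel-verified Lean document; each statement's English description precedes it below -/
import Mathlib

section
/- Let v be a vertex of a finite simple directed graph G. The number of unordered pairs {x,y} of neighbors of v such that the induced subgraph on {v,x,y} is a transitive triangle with all three edges single arcs, i.e., arcs a→b, a→c, b→c for some labeling {a,b,c} of {v,x,y}, equals m→(C(v),B(v)) + m→(B(v),B(v)) + m→(C(v),C(v)) (Table 2, line 13, of Theorem 1). -/
open Finset

/-- Bidirected neighbors of `v`. -/
def dsetA {V : Type*} [Fintype V] (E : V → V → Prop) [DecidableRel E] (v : V) : Finset V :=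
  univ.filter fun u => E u v ∧ E v u

/-- Out-neighbors of `v` by a single arc from `v`. -/
def dsetB {V : Type*} [Fintype V] (E : V → V → Prop) [DecidableRel E] (v : V) : Finset V :=
  univ.filter fun u => E v u ∧ ¬ E u v

/-- In-neighbors of `v` by a single arc into `v`. -/
def dsetC {V : Type*} [Fintype V] (E : V → V → Prop) [DecidableRel E] (v : V) : Finset V :=
  univ.filter fun u => E u v ∧ ¬ E v u

/-- Neighbors of `v`: any `u` with an arc to or from `v`. -/
def dnbr {V : Type*} [Fintype V] (E : V → V → Prop) [DecidableRel E] (v : V) : Finset V :=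
  univ.filter fun u => E u v ∨ E v u

/-- A single arc from `a` to `b` (no reverse arc). -/
abbrev singleArc {V : Type*} (E : V → V → Prop) (a b : V) : Prop := E a b ∧ ¬ E b a

/-- Number of single (non-reciprocated) arcs from `S` to `T`. -/
def mTo {V : Type*} (E : V → V → Prop) [DecidableRel E] (S T : Finset V) : ℕ :=
  ((S ×ˢ T).filter fun p => E p.1 p.2 ∧ ¬ E p.2 p.1).card

/-- Table 2, line 13: the number of unordered pairs `{x,y}` of neighbors of `v` such that
the induced subgraph on `{v,x,y}` is a transitive triangle of single arcs (arcs
`a→b`, `a→c`, `b→c` for some labeling `{a,b,c}` of `{v,x,y}`) equals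
`m→(C(v),B(v)) + m→(B(v),B(v)) + m→(C(v),C(v))`. -/
theorem stmt4 {V : Type*} [Fintype V] [DecidableEq V] (E : V → V → Prop) [DecidableRel E]
    (hirr : ∀ x, ¬ E x x) (v : V) :
    ((((dnbr E v) ×ˢ (dnbr E v)).filter fun p =>
        p.1 ≠ p.2 ∧
        ∃ a b c : V, ({a, b, c} : Finset V) = {v, p.1, p.2} ∧
          singleArc E a b ∧ singleArc E a c ∧ singleArc E b c).image
      fun p => ({p.1, p.2} : Finset V)).card
      = mTo E (dsetC E v) (dsetB E v) + mTo E (dsetB E v) (dsetB E v)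
        + mTo E (dsetC E v) (dsetC E v) := by

  classical
  have hne : ∀ a b : V, singleArc E a b → a ≠ b := by
    rintro a b ⟨h1, _⟩ rfl; exact hirr a h1
  set S1 := ((dsetC E v ×ˢ dsetB E v).filter fun p : V × V => E p.1 p.2 ∧ ¬ E p.2 p.1) with hS1
  set S2 := ((dsetB E v ×ˢ dsetB E v).filter fun p : V × V => E p.1 p.2 ∧ ¬ E p.2 p.1) with hS2
  set S3 := ((dsetC E v ×ˢ dsetC E v).filter fun p : V × V => E p.1 p.2 ∧ ¬ E p.2 p.1) with hS3
  have hsingle : ∀ p ∈ S1 ∪ S2 ∪ S3, singleArc E p.1 p.2 := by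
    intro p hp
    simp only [hS1, hS2, hS3, mem_union, mem_filter] at hp
    rcases hp with (⟨_, h⟩ | ⟨_, h⟩) | ⟨_, h⟩ <;> exact h
  have himg : ((((dnbr E v) ×ˢ (dnbr E v)).filter fun p =>
        p.1 ≠ p.2 ∧
        ∃ a b c : V, ({a, b, c} : Finset V) = {v, p.1, p.2} ∧
          singleArc E a b ∧ singleArc E a c ∧ singleArc E b c).image
      fun p => ({p.1, p.2} : Finset V))
      = (S1 ∪ S2 ∪ S3).image (fun p => ({p.1, p.2} : Finset V)) := by
    ext s
    simp only [mem_image, mem_filter, mem_union, mem_product, hS1, hS2, hS3,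
      dnbr, dsetB, dsetC, mem_univ, true_and, mem_filter]
    constructor
    · rintro ⟨⟨x, y⟩, ⟨⟨hxn, hyn⟩, hxy, a, b, c, habc, hab, hac, hbc⟩, rfl⟩
      have hab' := hne a b hab
      have hac' := hne a c hac
      have hbc' := hne b c hbc
      have hv : v ∈ ({a, b, c} : Finset V) := by rw [habc]; simp
      simp only [mem_insert, mem_singleton] at hv
      -- helper: if u,w are the two non-v elements among a,b,c, then {u,w} = {x,y}
      have key : ∀ u w : V, u ≠ v → w ≠ v → u ≠ w → u ∈ ({a,b,c} : Finset V) →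
          w ∈ ({a,b,c} : Finset V) → ({u, w} : Finset V) = {x, y} := by
        intro u w huv hwv huw hu hw
        rw [habc] at hu hw
        simp only [mem_insert, mem_singleton] at hu hw
        rcases hu with rfl | rfl | rfl
        · exact absurd rfl huv
        · rcases hw with rfl | rfl | rfl
          · exact absurd rfl hwv
          · exact absurd rfl huw
          · rfl
        · rcases hw with rfl | rfl | rfl
          · exact absurd rfl hwv
          · exact Finset.pair_comm u w
          · exact absurd rfl huw
      rcases hv with rfl | rfl | rfl
      · -- v = a : source; pair (b, c) ∈ S2
        refine ⟨(b, c), Or.inl (Or.inr ⟨⟨⟨hab.1, hab.2⟩, ⟨hac.1, hac.2⟩⟩, hbc⟩), ?_⟩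
        exact key b c (Ne.symm hab') (Ne.symm hac') hbc' (by simp) (by simp)
      · -- v = b : middle; pair (a, c) ∈ S1
        refine ⟨(a, c), Or.inl (Or.inl ⟨⟨⟨hab.1, hab.2⟩, ⟨hbc.1, hbc.2⟩⟩, hac⟩), ?_⟩
        exact key a c hab' (Ne.symm hbc') hac' (by simp) (by simp)
      · -- v = c : sink; pair (a, b) ∈ S3
        refine ⟨(a, b), Or.inr ⟨⟨⟨hac.1, hac.2⟩, ⟨hbc.1, hbc.2⟩⟩, hab⟩, ?_⟩
        exact key a b hac' hbc' hab' (by simp) (by simp)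
    · rintro ⟨⟨x, y⟩, hq, rfl⟩
      rcases hq with (⟨⟨⟨hx1, hx2⟩, hy1, hy2⟩, harc⟩ | ⟨⟨⟨hx1, hx2⟩, hy1, hy2⟩, harc⟩) |
        ⟨⟨⟨hx1, hx2⟩, hy1, hy2⟩, harc⟩
      · -- x ∈ C, y ∈ B : arcs x→v, v→y, x→y
        refine ⟨(x, y), ⟨⟨Or.inl hx1, Or.inr hy1⟩, ?_, x, v, y, ?_,
          ⟨hx1, hx2⟩, harc, ⟨hy1, hy2⟩⟩, rfl⟩
        · exact fun h => hx2 (by rw [show x = y from h]; exact hy1)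
        · ext u; simp only [mem_insert, mem_singleton]; tauto
      · -- x, y ∈ B : v source
        refine ⟨(x, y), ⟨⟨Or.inr hx1, Or.inr hy1⟩, hne x y harc, v, x, y, rfl,
          ⟨hx1, hx2⟩, ⟨hy1, hy2⟩, harc⟩, rfl⟩
      · -- x, y ∈ C : v sink
        refine ⟨(x, y), ⟨⟨Or.inl hx1, Or.inl hy1⟩, hne x y harc, x, y, v, ?_,
          harc, ⟨hx1, hx2⟩, ⟨hy1, hy2⟩⟩, rfl⟩
        ext u; simp only [mem_insert, mem_singleton]; tauto
  rw [himg, Finset.card_image_of_injOn]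
  · have d12 : Disjoint S1 S2 := by
      rw [Finset.disjoint_left]
      intro p hp1 hp2
      simp only [hS1, hS2, mem_filter, mem_product, dsetB, dsetC, mem_univ, true_and,
        mem_filter] at hp1 hp2
      exact hp1.1.1.2 hp2.1.1.1
    have d13 : Disjoint (S1 ∪ S2) S3 := by
      rw [Finset.disjoint_left]
      intro p hp1 hp2
      simp only [hS1, hS2, hS3, mem_union, mem_filter, mem_product, dsetB, dsetC,
        mem_univ, true_and, mem_filter] at hp1 hp2
      rcases hp1 with ⟨⟨_, hy⟩, _⟩ | ⟨⟨hx, _⟩, _⟩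
      · exact hp2.1.2.2 hy.1
      · exact hp2.1.1.2 hx.1
    rw [Finset.card_union_of_disjoint d13, Finset.card_union_of_disjoint d12]
    rfl
  · intro p hp q hq hpq
    simp only [Finset.coe_union, Set.mem_union] at hp hq
    have hp' : p ∈ S1 ∪ S2 ∪ S3 := by simp only [mem_union]; tauto
    have hq' : q ∈ S1 ∪ S2 ∪ S3 := by simp only [mem_union]; tauto
    have hps := hsingle p hp'
    have hqs := hsingle q hq'
    have hpq' : ({p.1, p.2} : Finset V) = {q.1, q.2} := hpq
    have h1 : p.1 ∈ ({q.1, q.2} : Finset V) := by rw [← hpq']; simp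
    have h2 : p.2 ∈ ({q.1, q.2} : Finset V) := by rw [← hpq']; simp
    simp only [mem_insert, mem_singleton] at h1 h2
    have hpne := hne p.1 p.2 hps
    rcases h1 with h1 | h1
    · rcases h2 with h2 | h2
      · exact absurd (h1.trans h2.symm) hpne
      · exact Prod.ext h1 h2
    · rcases h2 with h2 | h2
      · exfalso; exact hps.2 (h2 ▸ h1 ▸ hqs.1)
      · exact absurd (h1.trans h2.symm) hpne
end

section
/- Let v be a vertex of a finite simple directed graph G. The number of unordered pairs {x,y} of neighbors of v such that the induced subgraph on {v,x,y} is a triangle with exactly one bidirected edge and two single arcs both pointing into the vertex not on the bidirected edge (i.e., for some labeling {a,b,c} of {v,x,y}: a↔b bidirected, a→c, b→c) equals m→(A(v),B(v)) + m↔(C(v),C(v)) (Table 2, line 9, of Theorem 1). -/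
open Finset

/-- A bidirected edge between `a` and `b`. -/
abbrev biArc {V : Type*} (E : V → V → Prop) (a b : V) : Prop := E a b ∧ E b a

/-- Number of unordered pairs `{x,y}`, `x ∈ S`, `y ∈ T`, `x ≠ y`, joined by a bidirected edge. -/
def mBi {V : Type*} [DecidableEq V] (E : V → V → Prop) [DecidableRel E] (S T : Finset V) : ℕ :=
  (((S ×ˢ T).filter fun p => p.1 ≠ p.2 ∧ E p.1 p.2 ∧ E p.2 p.1).image
    fun p => ({p.1, p.2} : Finset V)).card

set_option maxHeartbeats 1000000 in
lemma triple_key {V : Type*} [Fintype V] [DecidableEq V] (E : V → V → Prop) [DecidableRel E]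
    (hirr : ∀ x, ¬ E x x) (v x y : V)
    (hx : x ∈ dnbr E v) (hy : y ∈ dnbr E v) (hxy : x ≠ y) :
    (∃ a b c : V, ({a, b, c} : Finset V) = {v, x, y} ∧
        biArc E a b ∧ singleArc E a c ∧ singleArc E b c) ↔
    ((x ∈ dsetA E v ∧ y ∈ dsetB E v ∧ singleArc E x y) ∨
     (y ∈ dsetA E v ∧ x ∈ dsetB E v ∧ singleArc E y x) ∨
     (x ∈ dsetC E v ∧ y ∈ dsetC E v ∧ biArc E x y)) := by
  simp only [dnbr, dsetA, dsetB, dsetC, mem_filter, mem_univ, true_and] at *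
  constructor
  · rintro ⟨a, b, c, hset, hab, hac, hbc⟩
    have hxv : x ≠ v := by rintro rfl; rcases hx with h | h <;> exact hirr _ h
    have hyv : y ≠ v := by rintro rfl; rcases hy with h | h <;> exact hirr _ h
    have hmem : ∀ z : V, (z = a ∨ z = b ∨ z = c) ↔ (z = v ∨ z = x ∨ z = y) := by
      intro z
      have := Finset.ext_iff.mp hset z
      simpa using this
    have hv := (hmem v).mpr (Or.inl rfl)
    have hxm := (hmem x).mpr (Or.inr (Or.inl rfl))
    have hym := (hmem y).mpr (Or.inr (Or.inr rfl))
    clear hmem hset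
    rcases hv with rfl | rfl | rfl <;>
      rcases hxm with rfl | rfl | rfl <;>
      rcases hym with rfl | rfl | rfl <;>
      first
        | exact absurd rfl hxy
        | exact absurd rfl hxv
        | exact absurd rfl hyv
        | exact absurd hab.1 (hirr _)
        | exact absurd hac.1 (hirr _)
        | exact absurd hbc.1 (hirr _)
        | tauto
  · rintro (⟨hA, hB, hs⟩ | ⟨hA, hB, hs⟩ | ⟨hCx, hCy, hbi⟩)
    · exact ⟨v, x, y, rfl, ⟨hA.2, hA.1⟩, hB, hs⟩
    · exact ⟨v, y, x, by rw [Finset.pair_comm y x], ⟨hA.2, hA.1⟩, hB, hs⟩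
    · refine ⟨x, y, v, ?_, hbi, hCx, hCy⟩
      ext z; simp; tauto


/-- Table 2, line 9: the number of unordered pairs `{x,y}` of neighbors of `v` such that
the induced subgraph on `{v,x,y}` is a triangle with one bidirected edge `a↔b` and single
arcs `a→c`, `b→c` (for some labeling `{a,b,c}` of `{v,x,y}`) equals
`m→(A(v),B(v)) + m↔(C(v),C(v))`. -/

theorem stmt5 {V : Type*} [Fintype V] [DecidableEq V] (E : V → V → Prop) [DecidableRel E]
    (hirr : ∀ x, ¬ E x x) (v : V) :
    ((((dnbr E v) ×ˢ (dnbr E v)).filter fun p =>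
        p.1 ≠ p.2 ∧
        ∃ a b c : V, ({a, b, c} : Finset V) = {v, p.1, p.2} ∧
          biArc E a b ∧ singleArc E a c ∧ singleArc E b c).image
      fun p => ({p.1, p.2} : Finset V)).card
      = mTo E (dsetA E v) (dsetB E v) + mBi E (dsetC E v) (dsetC E v) := by
  classical
  set S1 : Finset (V × V) :=
    ((dsetA E v) ×ˢ (dsetB E v)).filter fun p => E p.1 p.2 ∧ ¬ E p.2 p.1 with hS1
  set S2 : Finset (V × V) :=
    ((dsetC E v) ×ˢ (dsetC E v)).filter fun p => p.1 ≠ p.2 ∧ E p.1 p.2 ∧ E p.2 p.1 with hS2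
  have hAmem : ∀ z, z ∈ dsetA E v ↔ (E z v ∧ E v z) := by
    intro z; simp [dsetA]
  have hBmem : ∀ z, z ∈ dsetB E v ↔ (E v z ∧ ¬ E z v) := by
    intro z; simp [dsetB]
  have hCmem : ∀ z, z ∈ dsetC E v ↔ (E z v ∧ ¬ E v z) := by
    intro z; simp [dsetC]
  have hnbr : ∀ z, z ∈ dnbr E v ↔ (E z v ∨ E v z) := by
    intro z; simp [dnbr]
  have himg :
      ((((dnbr E v) ×ˢ (dnbr E v)).filter fun p =>
        p.1 ≠ p.2 ∧
        ∃ a b c : V, ({a, b, c} : Finset V) = {v, p.1, p.2} ∧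
          biArc E a b ∧ singleArc E a c ∧ singleArc E b c).image
        fun p => ({p.1, p.2} : Finset V))
      = (S1.image fun p => ({p.1, p.2} : Finset V))
        ∪ (S2.image fun p => ({p.1, p.2} : Finset V)) := by
    ext s
    simp only [mem_union, mem_image, mem_filter, mem_product, hS1, hS2]
    constructor
    · rintro ⟨⟨x, y⟩, ⟨⟨hx, hy⟩, hne, hex⟩, rfl⟩
      rw [triple_key E hirr v x y hx hy hne] at hex
      rcases hex with ⟨hA, hB, hs⟩ | ⟨hA, hB, hs⟩ | ⟨hCx, hCy, hbi⟩
      · exact Or.inl ⟨(x, y), ⟨⟨hA, hB⟩, hs⟩, rfl⟩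
      · exact Or.inl ⟨(y, x), ⟨⟨hA, hB⟩, hs⟩, Finset.pair_comm y x⟩
      · exact Or.inr ⟨(x, y), ⟨⟨hCx, hCy⟩, hne, hbi⟩, rfl⟩
    · rintro (⟨⟨x, y⟩, ⟨⟨hA, hB⟩, hs⟩, rfl⟩ | ⟨⟨x, y⟩, ⟨⟨hCx, hCy⟩, hne, hbi⟩, rfl⟩)
      · have hA' := (hAmem x).mp hA
        have hB' := (hBmem y).mp hB
        have hne : x ≠ y := by rintro rfl; exact hB'.2 hA'.1
        refine ⟨(x, y), ⟨⟨(hnbr x).mpr (Or.inl hA'.1), (hnbr y).mpr (Or.inr hB'.1)⟩,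
          hne, ?_⟩, rfl⟩
        rw [triple_key E hirr v x y ((hnbr x).mpr (Or.inl hA'.1))
          ((hnbr y).mpr (Or.inr hB'.1)) hne]
        exact Or.inl ⟨hA, hB, hs⟩
      · have hCx' := (hCmem x).mp hCx
        have hCy' := (hCmem y).mp hCy
        refine ⟨(x, y), ⟨⟨(hnbr x).mpr (Or.inl hCx'.1), (hnbr y).mpr (Or.inl hCy'.1)⟩,
          hne, ?_⟩, rfl⟩
        rw [triple_key E hirr v x y ((hnbr x).mpr (Or.inl hCx'.1))
          ((hnbr y).mpr (Or.inl hCy'.1)) hne]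
        exact Or.inr (Or.inr ⟨hCx, hCy, hbi⟩)
  rw [himg]
  have hdisj : Disjoint (S1.image fun p => ({p.1, p.2} : Finset V))
      (S2.image fun p => ({p.1, p.2} : Finset V)) := by
    rw [Finset.disjoint_left]
    intro s hs1 hs2
    obtain ⟨⟨x, y⟩, hp, rfl⟩ := Finset.mem_image.mp hs1
    obtain ⟨⟨x', y'⟩, hq, heq⟩ := Finset.mem_image.mp hs2
    simp only [hS1, hS2, mem_filter, mem_product] at hp hq
    have hx : x ∈ ({x', y'} : Finset V) := by rw [heq]; simp
    have hA := (hAmem x).mp hp.1.1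
    rcases Finset.mem_insert.mp hx with rfl | hx
    · exact ((hCmem x).mp hq.1.1).2 hA.2
    · rw [Finset.mem_singleton] at hx; subst hx
      exact ((hCmem x).mp hq.1.2).2 hA.2
  rw [Finset.card_union_of_disjoint hdisj]
  have h1 : (S1.image fun p => ({p.1, p.2} : Finset V)).card = mTo E (dsetA E v) (dsetB E v) := by
    rw [Finset.card_image_of_injOn, hS1, mTo]
    rintro ⟨x, y⟩ hp ⟨x', y'⟩ hq heq
    simp only [hS1, Finset.mem_coe, mem_filter, mem_product] at hp hq
    simp only at heq
    have hAB : ∀ z, z ∈ dsetA E v → z ∈ dsetB E v → False := by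
      intro z h1 h2; exact ((hBmem z).mp h2).2 ((hAmem z).mp h1).1
    have hx : x ∈ ({x', y'} : Finset V) := by rw [← heq]; simp
    have hy : y ∈ ({x', y'} : Finset V) := by rw [← heq]; simp
    have hxx : x = x' := by
      rcases Finset.mem_insert.mp hx with h | h
      · exact h
      · rw [Finset.mem_singleton] at h; subst h
        exact absurd hq.1.2 (fun hc => hAB x hp.1.1 hc)
    subst hxx
    have hyy : y = y' := by
      rcases Finset.mem_insert.mp hy with h | h
      · subst h; exact absurd hq.1.1 (fun hc => hAB y hc hp.1.2)
      · exact Finset.mem_singleton.mp h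
    subst hyy
    rfl
  have h2 : (S2.image fun p => ({p.1, p.2} : Finset V)).card = mBi E (dsetC E v) (dsetC E v) := by
    rw [hS2, mBi]
  rw [h1, h2]
end

section
/- Let v be a vertex of a finite simple directed graph G. The number of unordered pairs {x,y} of neighbors of v such that the induced subgraph on {v,x,y} is a triangle consisting of a directed two-arc path closed by a bidirected edge between its endpoints (i.e., for some labeling {a,b,c} of {v,x,y}: single arcs a→c and c→b, and a↔b bidirected) equals m→(B(v),A(v)) + m→(A(v),C(v)) + m↔(C(v),B(v)) (Table 2, line 10, of Theorem 1). -/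
open Finset

section Aux
variable {V : Type*} [DecidableEq V]

lemma pair_eq_of_mem' {x y a b : V} (hx : x ∈ ({a, b} : Finset V))
    (hy : y ∈ ({a, b} : Finset V)) (hxy : x ≠ y) : ({x, y} : Finset V) = {a, b} := by
  simp only [mem_insert, mem_singleton] at hx hy
  rcases hx with rfl | rfl <;> rcases hy with rfl | rfl <;> simp_all [Finset.pair_comm]

lemma mem_pair_of_eq {x y a b : V} (h : ({x, y} : Finset V) = {a, b}) :
    (a = x ∨ a = y) ∧ (b = x ∨ b = y) := by
  constructor
  · have : a ∈ ({x, y} : Finset V) := by rw [h]; simp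
    simpa using this
  · have : b ∈ ({x, y} : Finset V) := by rw [h]; simp
    simpa using this

end Aux

/-- Table 2, line 10: the number of unordered pairs `{x,y}` of neighbors of `v` such that
the induced subgraph on `{v,x,y}` is a directed two-arc path closed by a bidirected edge
(single arcs `a→c`, `c→b`, and `a↔b` bidirected, for some labeling `{a,b,c}` of `{v,x,y}`)
equals `m→(B(v),A(v)) + m→(A(v),C(v)) + m↔(C(v),B(v))`. -/
theorem stmt6 {V : Type*} [Fintype V] [DecidableEq V] (E : V → V → Prop) [DecidableRel E]
    (hirr : ∀ x, ¬ E x x) (v : V) :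
    ((((dnbr E v) ×ˢ (dnbr E v)).filter fun p =>
        p.1 ≠ p.2 ∧
        ∃ a b c : V, ({a, b, c} : Finset V) = {v, p.1, p.2} ∧
          singleArc E a c ∧ singleArc E c b ∧ biArc E a b).image
      fun p => ({p.1, p.2} : Finset V)).card
      = mTo E (dsetB E v) (dsetA E v) + mTo E (dsetA E v) (dsetC E v)
        + mBi E (dsetC E v) (dsetB E v) := by
  classical
  set f : V × V → Finset V := fun p => ({p.1, p.2} : Finset V) with hf
  set P1 := ((dsetB E v ×ˢ dsetA E v).filter fun p => E p.1 p.2 ∧ ¬ E p.2 p.1) with hP1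
  set P2 := ((dsetA E v ×ˢ dsetC E v).filter fun p => E p.1 p.2 ∧ ¬ E p.2 p.1) with hP2
  set P3 := ((dsetC E v ×ˢ dsetB E v).filter fun p => p.1 ≠ p.2 ∧ E p.1 p.2 ∧ E p.2 p.1)
    with hP3
  have hA : ∀ u, u ∈ dsetA E v ↔ E u v ∧ E v u := fun u => by simp [dsetA]
  have hB : ∀ u, u ∈ dsetB E v ↔ E v u ∧ ¬ E u v := fun u => by simp [dsetB]
  have hC : ∀ u, u ∈ dsetC E v ↔ E u v ∧ ¬ E v u := fun u => by simp [dsetC]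
  have hN : ∀ u, u ∈ dnbr E v ↔ E u v ∨ E v u := fun u => by simp [dnbr]
  have key : ((((dnbr E v) ×ˢ (dnbr E v)).filter fun p =>
        p.1 ≠ p.2 ∧
        ∃ a b c : V, ({a, b, c} : Finset V) = {v, p.1, p.2} ∧
          singleArc E a c ∧ singleArc E c b ∧ biArc E a b).image f)
      = (P1.image f ∪ P2.image f) ∪ P3.image f := by
    ext s
    simp only [mem_union, mem_image, mem_filter, mem_product, hP1, hP2, hP3]
    constructor
    · rintro ⟨⟨x, y⟩, ⟨⟨hx, hy⟩, hxy, a, b, c, habc,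
        ⟨hac1, hac2⟩, ⟨hcb1, hcb2⟩, ⟨hab1, hab2⟩⟩, rfl⟩
      have hac : a ≠ c := by rintro rfl; exact hirr a hac1
      have hcb : c ≠ b := by rintro rfl; exact hirr c hcb1
      have hab : a ≠ b := by rintro rfl; exact hirr a hab1
      have hv : v = a ∨ v = b ∨ v = c := by
        have : v ∈ ({a, b, c} : Finset V) := by rw [habc]; simp
        simpa using this
      -- memberships of a b c in {v, x, y}
      have hma : a ∈ ({v, x, y} : Finset V) := by rw [← habc]; simp
      have hmb : b ∈ ({v, x, y} : Finset V) := by rw [← habc]; simp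
      have hmc : c ∈ ({v, x, y} : Finset V) := by rw [← habc]; simp
      simp only [mem_insert, mem_singleton] at hma hmb hmc
      rcases hv with rfl | rfl | rfl
      · -- v = a : out-arc v→c (c ∈ B), bidir v↔b (b ∈ A), single arc c→b
        left; left
        refine ⟨(c, b), ⟨⟨(hB c).2 ⟨hac1, hac2⟩, (hA b).2 ⟨hab2, hab1⟩⟩, hcb1, hcb2⟩, ?_⟩
        have hb2 : b ∈ ({x, y} : Finset V) := by
          rcases hmb with h | h | h
          · exact absurd h.symm hab
          · simp [h]
          · simp [h]
        have hc2 : c ∈ ({x, y} : Finset V) := by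
          rcases hmc with h | h | h
          · exact absurd h.symm hac
          · simp [h]
          · simp [h]
        exact pair_eq_of_mem' hc2 hb2 hcb
      · -- v = b : bidir a↔v (a ∈ A), in-arc c→v (c ∈ C), single arc a→c
        left; right
        refine ⟨(a, c), ⟨⟨(hA a).2 ⟨hab1, hab2⟩, (hC c).2 ⟨hcb1, hcb2⟩⟩, hac1, hac2⟩, ?_⟩
        have ha2 : a ∈ ({x, y} : Finset V) := by
          rcases hma with h | h | h
          · exact absurd h hab
          · simp [h]
          · simp [h]
        have hc2 : c ∈ ({x, y} : Finset V) := by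
          rcases hmc with h | h | h
          · exact absurd h hcb
          · simp [h]
          · simp [h]
        exact pair_eq_of_mem' ha2 hc2 hac
      · -- v = c : in-arc a→v (a ∈ C), out-arc v→b (b ∈ B), bidir a↔b
        right
        refine ⟨(a, b), ⟨⟨(hC a).2 ⟨hac1, hac2⟩, (hB b).2 ⟨hcb1, hcb2⟩⟩, hab, hab1, hab2⟩, ?_⟩
        have ha2 : a ∈ ({x, y} : Finset V) := by
          rcases hma with h | h | h
          · exact absurd h hac
          · simp [h]
          · simp [h]
        have hb2 : b ∈ ({x, y} : Finset V) := by
          rcases hmb with h | h | h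
          · exact absurd h hcb.symm
          · simp [h]
          · simp [h]
        exact pair_eq_of_mem' ha2 hb2 hab
    · rintro ((⟨⟨x, y⟩, ⟨⟨hx, hy⟩, h1, h2⟩, rfl⟩ | ⟨⟨x, y⟩, ⟨⟨hx, hy⟩, h1, h2⟩, rfl⟩) |
        ⟨⟨x, y⟩, ⟨⟨hx, hy⟩, hne, h1, h2⟩, rfl⟩)
      · -- x ∈ B, y ∈ A, single x→y ; take a = v, b = y, c = x
        rw [hB] at hx; rw [hA] at hy
        refine ⟨(x, y), ⟨⟨(hN x).2 (Or.inr hx.1), (hN y).2 (Or.inl hy.1)⟩,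
          ?_, v, y, x, ?_, ⟨hx.1, hx.2⟩, ⟨h1, h2⟩, ⟨hy.2, hy.1⟩⟩, rfl⟩
        · exact fun h => hx.2 ((show x = y from h).symm ▸ hy.1)
        · show ({v, y, x} : Finset V) = {v, x, y}
          rw [Finset.pair_comm y x]
      · -- x ∈ A, y ∈ C, single x→y ; take a = x, b = v, c = y
        rw [hA] at hx; rw [hC] at hy
        refine ⟨(x, y), ⟨⟨(hN x).2 (Or.inl hx.1), (hN y).2 (Or.inl hy.1)⟩,
          ?_, x, v, y, ?_, ⟨h1, h2⟩, ⟨hy.1, hy.2⟩, ⟨hx.1, hx.2⟩⟩, rfl⟩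
        · exact fun h => hy.2 ((show x = y from h) ▸ hx.2)
        · show ({x, v, y} : Finset V) = {v, x, y}
          rw [Finset.insert_comm]
      · -- x ∈ C, y ∈ B, bidir x↔y ; take a = x, b = y, c = v
        rw [hC] at hx; rw [hB] at hy
        refine ⟨(x, y), ⟨⟨(hN x).2 (Or.inl hx.1), (hN y).2 (Or.inr hy.1)⟩,
          hne, x, y, v, ?_, ⟨hx.1, hx.2⟩, ⟨hy.1, hy.2⟩, ⟨h1, h2⟩⟩, rfl⟩
        show ({x, y, v} : Finset V) = {v, x, y}
        ext z; simp only [mem_insert, mem_singleton]; tauto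
  rw [key]
  have d12 : Disjoint (P1.image f) (P2.image f) := by
    rw [Finset.disjoint_left]
    intro s hs1 hs2
    obtain ⟨⟨x, y⟩, hm, rfl⟩ := Finset.mem_image.1 hs1
    obtain ⟨⟨x', y'⟩, hm', hs⟩ := Finset.mem_image.1 hs2
    simp only [hP1, hP2, mem_filter, mem_product] at hm hm'
    rw [hB] at hm; rw [hA] at hm hm'; rw [hC] at hm'
    obtain ⟨h1, h2⟩ := mem_pair_of_eq (show ({x, y} : Finset V) = {x', y'} from hs.symm)
    rcases h1 with rfl | rfl <;> rcases h2 with rfl | rfl <;> tauto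
  have d3 : Disjoint (P1.image f ∪ P2.image f) (P3.image f) := by
    rw [Finset.disjoint_left]
    intro s hs1 hs2
    obtain ⟨⟨x', y'⟩, hm', hs⟩ := Finset.mem_image.1 hs2
    simp only [hP3, mem_filter, mem_product] at hm'
    rw [hC] at hm'; rw [hB] at hm'
    rcases Finset.mem_union.1 hs1 with h | h
    all_goals obtain ⟨⟨x, y⟩, hm, rfl⟩ := Finset.mem_image.1 h
    · simp only [hP1, mem_filter, mem_product] at hm
      rw [hB] at hm; rw [hA] at hm
      obtain ⟨h1, h2⟩ := mem_pair_of_eq (show ({x, y} : Finset V) = {x', y'} from hs.symm)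
      rcases h1 with rfl | rfl <;> rcases h2 with rfl | rfl <;> tauto
    · simp only [hP2, mem_filter, mem_product] at hm
      rw [hA] at hm; rw [hC] at hm
      obtain ⟨h1, h2⟩ := mem_pair_of_eq (show ({x, y} : Finset V) = {x', y'} from hs.symm)
      rcases h1 with rfl | rfl <;> rcases h2 with rfl | rfl <;> tauto
  rw [Finset.card_union_of_disjoint d3, Finset.card_union_of_disjoint d12]
  have inj1 : Set.InjOn f P1 := by
    rintro ⟨x, y⟩ hm ⟨x', y'⟩ hm' hs
    simp only [hP1, Finset.coe_filter, Set.mem_setOf_eq, mem_product] at hm hm'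
    rw [hB] at hm hm'; rw [hA] at hm hm'
    obtain ⟨h1, h2⟩ := mem_pair_of_eq (show ({x, y} : Finset V) = {x', y'} from hs)
    rcases h1 with rfl | rfl <;> rcases h2 with rfl | rfl <;> first | rfl | tauto
  have inj2 : Set.InjOn f P2 := by
    rintro ⟨x, y⟩ hm ⟨x', y'⟩ hm' hs
    simp only [hP2, Finset.coe_filter, Set.mem_setOf_eq, mem_product] at hm hm'
    rw [hA] at hm hm'; rw [hC] at hm hm'
    obtain ⟨h1, h2⟩ := mem_pair_of_eq (show ({x, y} : Finset V) = {x', y'} from hs)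
    rcases h1 with rfl | rfl <;> rcases h2 with rfl | rfl <;> first | rfl | tauto
  rw [Finset.card_image_of_injOn inj1, Finset.card_image_of_injOn inj2]
  rfl
end

section
/- Let e={u,v} be an edge of a finite simple undirected graph G. The number of unordered pairs {v1,v2} ⊆ adj({u,v}) such that the subgraph induced on {u,v,v1,v2} is the path v1–u–v–v2 (an induced P4 with {u,v} as its central edge) equals n_x·n_y − m(X,Y) (Theorem 2, Table 3, P4 row). -/
/-!
A pair `{v₁, v₂}` spans an induced path `v₁–u–v–v₂` exactly when, after ordering it so that
`v₁ ∼ u`, we have `v₁ ∈ X`, `v₂ ∈ Y` and `v₁ ≁ v₂`. Since `X` and `Y` are disjoint, an unordered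
pair meeting both determines its ordered version, so the count is the number of non-adjacent
pairs in `X × Y`, i.e. `n_x n_y` minus the `m(X, Y)` adjacent ones.
-/

open Finset

variable {V : Type*}

/-- `X` for edge `{u,v}`: neighbors of `u` other than `v` that are not neighbors of `v`. -/
def eX [Fintype V] [DecidableEq V] (G : SimpleGraph V) [DecidableRel G.Adj] (u v : V) :
    Finset V :=
  univ.filter fun w => w ≠ v ∧ G.Adj u w ∧ ¬ G.Adj v w

/-- `Y` for edge `{u,v}`: neighbors of `v` other than `u` that are not neighbors of `u`. -/
def eY [Fintype V] [DecidableEq V] (G : SimpleGraph V) [DecidableRel G.Adj] (u v : V) :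
    Finset V :=
  univ.filter fun w => w ≠ u ∧ G.Adj v w ∧ ¬ G.Adj u w

/-- `Z` for edge `{u,v}`: common neighbors of `u` and `v`. -/
def eZ [Fintype V] [DecidableEq V] (G : SimpleGraph V) [DecidableRel G.Adj] (u v : V) :
    Finset V :=
  univ.filter fun w => G.Adj u w ∧ G.Adj v w

/-- `m(S,T)`: the number of edges of `G` with one endpoint in `S` and the other in `T`. -/
def mE [DecidableEq V] (G : SimpleGraph V) [DecidableRel G.Adj] (S T : Finset V) : ℕ :=
  (((S ×ˢ T).filter fun p => G.Adj p.1 p.2).image fun p => ({p.1, p.2} : Finset V)).card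

/-- `adj(W)`: vertices outside `W` having a neighbor in `W`. -/
def adjW [Fintype V] [DecidableEq V] (G : SimpleGraph V) [DecidableRel G.Adj] (W : Finset V) :
    Finset V :=
  univ.filter fun x => x ∉ W ∧ ∃ w ∈ W, G.Adj x w

section PairsAcross

variable [DecidableEq V] {S T : Finset V}

lemma injOn_pair_of_disjoint (hST : Disjoint S T) :
    Set.InjOn (fun p : V × V => ({p.1, p.2} : Finset V)) ↑(S ×ˢ T) := by
  rintro ⟨a, b⟩ hab ⟨c, d⟩ hcd (h : ({a, b} : Finset V) = {c, d})
  simp only [coe_product, Set.mem_prod, mem_coe] at hab hcd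
  have ha : a ∈ ({c, d} : Finset V) := by rw [← h]; simp
  have hb : b ∈ ({c, d} : Finset V) := by rw [← h]; simp
  simp only [mem_insert, mem_singleton] at ha hb
  have hac : a = c := ha.resolve_right fun had => disjoint_left.mp hST hab.1 (had ▸ hcd.2)
  have hbd : b = d := hb.resolve_left fun hbc => disjoint_left.mp hST (hbc ▸ hcd.1) hab.2
  rw [hac, hbd]

lemma card_image_pair_filter_of_disjoint (hST : Disjoint S T) (P : V × V → Prop)
    [DecidablePred P] :
    #(((S ×ˢ T).filter P).image fun p => ({p.1, p.2} : Finset V)) = #((S ×ˢ T).filter P) :=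
  card_image_of_injOn ((injOn_pair_of_disjoint hST).mono (coe_subset.mpr (filter_subset _ _)))

lemma mE_eq_card_filter_adj (G : SimpleGraph V) [DecidableRel G.Adj] (hST : Disjoint S T) :
    mE G S T = #((S ×ˢ T).filter fun p => G.Adj p.1 p.2) :=
  card_image_pair_filter_of_disjoint hST _

lemma card_filter_not_adj_eq (G : SimpleGraph V) [DecidableRel G.Adj] (hST : Disjoint S T) :
    (#((S ×ˢ T).filter fun p => ¬ G.Adj p.1 p.2) : ℤ) = #S * #T - mE G S T := by
  have hsplit := card_filter_add_card_filter_not (s := S ×ˢ T) (fun p => G.Adj p.1 p.2)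
  rw [card_product, ← mE_eq_card_filter_adj G hST] at hsplit
  omega

end PairsAcross

section EdgeNeighbourhood

variable [Fintype V] [DecidableEq V] (G : SimpleGraph V) [DecidableRel G.Adj] (u v : V)

lemma disjoint_eX_eY : Disjoint (eX G u v) (eY G u v) := by
  simp only [disjoint_left, eX, eY, mem_filter, mem_univ, true_and]
  exact fun _ hX hY => hX.2.2 hY.2.1

lemma image_pair_inducedP4_eq :
    (((adjW G {u, v}) ×ˢ (adjW G {u, v})).filter fun p =>
        p.1 ≠ p.2 ∧
        ((G.Adj u p.1 ∧ G.Adj v p.2 ∧ ¬ G.Adj u p.2 ∧ ¬ G.Adj v p.1 ∧ ¬ G.Adj p.1 p.2) ∨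
         (G.Adj u p.2 ∧ G.Adj v p.1 ∧ ¬ G.Adj u p.1 ∧ ¬ G.Adj v p.2 ∧ ¬ G.Adj p.1 p.2))).image
      (fun p => ({p.1, p.2} : Finset V))
      = (((eX G u v) ×ˢ (eY G u v)).filter fun p => ¬ G.Adj p.1 p.2).image
          fun p => ({p.1, p.2} : Finset V) := by
  ext s
  simp only [mem_image, mem_filter, mem_product, adjW, eX, eY, mem_insert, mem_singleton,
    mem_univ, true_and, not_or, Prod.exists]
  constructor
  · rintro ⟨a, b, ⟨⟨⟨⟨hau, hav⟩, -⟩, ⟨hbu, hbv⟩, -⟩, -, hpath⟩, rfl⟩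
    rcases hpath with ⟨hua, hvb, hub, hva, hab⟩ | ⟨hub, hva, hua, hvb, hab⟩
    · exact ⟨a, b, ⟨⟨⟨hav, hua, hva⟩, hbu, hvb, hub⟩, hab⟩, rfl⟩
    · exact ⟨b, a, ⟨⟨⟨hbv, hub, hvb⟩, hau, hva, hua⟩, fun hba => hab hba.symm⟩, pair_comm _ _⟩
  · rintro ⟨a, b, ⟨⟨⟨hav, hua, hva⟩, hbu, hvb, hub⟩, hab⟩, rfl⟩
    refine ⟨a, b, ⟨⟨⟨⟨hua.ne.symm, hav⟩, u, by simp, hua.symm⟩,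
      ⟨hbu, hvb.ne.symm⟩, v, by simp, hvb.symm⟩, ?_, Or.inl ⟨hua, hvb, hub, hva, hab⟩⟩, rfl⟩
    rintro rfl
    exact hva hvb

end EdgeNeighbourhood

theorem stmt7_general [Fintype V] [DecidableEq V] (G : SimpleGraph V) [DecidableRel G.Adj]
    (u v : V) :
    ((((adjW G {u, v}) ×ˢ (adjW G {u, v})).filter fun p =>
        p.1 ≠ p.2 ∧
        ((G.Adj u p.1 ∧ G.Adj v p.2 ∧ ¬ G.Adj u p.2 ∧ ¬ G.Adj v p.1 ∧ ¬ G.Adj p.1 p.2) ∨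
         (G.Adj u p.2 ∧ G.Adj v p.1 ∧ ¬ G.Adj u p.1 ∧ ¬ G.Adj v p.2 ∧ ¬ G.Adj p.1 p.2))).image
      fun p => ({p.1, p.2} : Finset V)).card
      = ((eX G u v).card : ℤ) * (eY G u v).card - mE G (eX G u v) (eY G u v) := by
  have hXY := disjoint_eX_eY G u v
  rw [image_pair_inducedP4_eq, card_image_pair_filter_of_disjoint hXY,
    card_filter_not_adj_eq G hXY]

/-- Theorem 2, Table 3, `P₄` row: the number of unordered pairs `{v₁,v₂} ⊆ adj({u,v})` such
that the induced subgraph on `{u,v,v₁,v₂}` is the path `v₁–u–v–v₂` equals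
`n_x·n_y − m(X,Y)`. -/
theorem stmt7 [Fintype V] [DecidableEq V] (G : SimpleGraph V) [DecidableRel G.Adj]
    (u v : V) (huv : G.Adj u v) :
    ((((adjW G {u, v}) ×ˢ (adjW G {u, v})).filter fun p =>
        p.1 ≠ p.2 ∧
        ((G.Adj u p.1 ∧ G.Adj v p.2 ∧ ¬ G.Adj u p.2 ∧ ¬ G.Adj v p.1 ∧ ¬ G.Adj p.1 p.2) ∨
         (G.Adj u p.2 ∧ G.Adj v p.1 ∧ ¬ G.Adj u p.1 ∧ ¬ G.Adj v p.2 ∧ ¬ G.Adj p.1 p.2))).image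
      fun p => ({p.1, p.2} : Finset V)).card
      = ((eX G u v).card : ℤ) * (eY G u v).card - mE G (eX G u v) (eY G u v) :=
  stmt7_general G u v
end

section
/- Let e={u,v} be an edge of a finite simple undirected graph G. The number of unordered pairs {v1,v2} ⊆ adj({u,v}) such that the subgraph induced on {u,v,v1,v2} is a tailed triangle (a triangle with one additional pendant vertex attached to one triangle vertex) equals (n_x + n_y)·n_z − m(X,Z) − m(Y,Z) + m(X,X) + m(Y,Y) (Theorem 2, Table 3, tailed-triangle row). -/
open Finset

variable {V : Type*}

/-!
For distinct `p₁, p₂ ∈ adj({u, v})`, the vertex of degree three of a tailed triangle on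
`{u, v, p₁, p₂}` must be `u` or `v`. If it is `u`, then either the triangle is `u v z` with
`z ∈ Z` and the tail is some `x ∈ X` not adjacent to `z`, or the triangle is `u x x'` for an edge
`x x'` inside `X` and the tail is `v`. Counting ordered pairs, every unordered pair appears twice:
the pairs `(x, z)` contribute `2 (n_x n_z − m(X, Z))` and the edges inside `X` contribute
`2 m(X, X)`. The vertex `v` gives the same count with `Y` in place of `X`.
-/

namespace Finset

variable {α : Type*} [DecidableEq α]

theorem pair_eq_pair_iff {a b c d : α} :
    ({a, b} : Finset α) = {c, d} ↔ a = c ∧ b = d ∨ a = d ∧ b = c := by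
  rw [← coe_inj, coe_pair, coe_pair, Set.pair_eq_pair_iff]

theorem card_eq_two_mul_card_image_pair {s : Finset (α × α)} (hne : ∀ p ∈ s, p.1 ≠ p.2)
    (hswap : ∀ p ∈ s, p.swap ∈ s) :
    #s = 2 * #(s.image fun p => ({p.1, p.2} : Finset α)) := by
  rw [card_eq_sum_card_image (fun p => ({p.1, p.2} : Finset α)) s, mul_comm, ← smul_eq_mul,
    ← sum_const]
  refine sum_congr rfl fun t ht => ?_
  obtain ⟨p, hp, rfl⟩ := mem_image.1 ht
  have hfiber : {q ∈ s | ({q.1, q.2} : Finset α) = {p.1, p.2}} = {p, p.swap} := by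
    ext q
    simp only [mem_filter, mem_insert, mem_singleton]
    constructor
    · rintro ⟨-, h⟩
      exact (pair_eq_pair_iff.1 h).imp (fun h => Prod.ext h.1 h.2) fun h => Prod.ext h.1 h.2
    · rintro (rfl | rfl)
      · exact ⟨hp, rfl⟩
      · exact ⟨hswap p hp, pair_comm _ _⟩
  rw [hfiber, card_pair fun h => hne p hp (congrArg Prod.fst h)]

theorem card_image_pair_of_subset_product {s : Finset (α × α)} {S T : Finset α}
    (hST : Disjoint S T) (hs : s ⊆ S ×ˢ T) :
    #(s.image fun p => ({p.1, p.2} : Finset α)) = #s := by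
  refine card_image_of_injOn fun p hp q hq hpq => ?_
  have hp' := mem_product.1 (hs hp)
  have hq' := mem_product.1 (hs hq)
  rcases pair_eq_pair_iff.1 hpq with h | ⟨h1, -⟩
  · exact Prod.ext h.1 h.2
  · exact (disjoint_left.1 hST hp'.1 (h1 ▸ hq'.2)).elim

end Finset

namespace SimpleGraph

section PairCounts

variable (G : SimpleGraph V) [DecidableRel G.Adj] (S T : Finset V)

def adjPairs : Finset (V × V) := (S ×ˢ T).filter fun p => G.Adj p.1 p.2

def nonAdjPairs : Finset (V × V) := (S ×ˢ T).filter fun p => ¬ G.Adj p.1 p.2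

variable {G S T}

@[simp]
theorem mem_adjPairs {p : V × V} :
    p ∈ G.adjPairs S T ↔ p.1 ∈ S ∧ p.2 ∈ T ∧ G.Adj p.1 p.2 := by
  simp [adjPairs, and_assoc]

@[simp]
theorem mem_nonAdjPairs {p : V × V} :
    p ∈ G.nonAdjPairs S T ↔ p.1 ∈ S ∧ p.2 ∈ T ∧ ¬ G.Adj p.1 p.2 := by
  simp [nonAdjPairs, and_assoc]

theorem adjPairs_subset : G.adjPairs S T ⊆ S ×ˢ T := filter_subset _ _

theorem nonAdjPairs_subset : G.nonAdjPairs S T ⊆ S ×ˢ T := filter_subset _ _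

variable (G S T)

theorem card_adjPairs_add_card_nonAdjPairs :
    #(G.adjPairs S T) + #(G.nonAdjPairs S T) = #S * #T := by
  rw [adjPairs, nonAdjPairs, card_filter_add_card_filter_not, card_product]

theorem card_nonAdjPairs_comm : #(G.nonAdjPairs S T) = #(G.nonAdjPairs T S) :=
  card_nbij' Prod.swap Prod.swap
    (fun _ _ => by simp_all [G.adj_comm]) (fun _ _ => by simp_all [G.adj_comm])
    (fun _ _ => rfl) fun _ _ => rfl

theorem mE_eq_card_adjPairs [DecidableEq V] (h : Disjoint S T) : mE G S T = #(G.adjPairs S T) :=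
  card_image_pair_of_subset_product h adjPairs_subset

theorem card_adjPairs_self [DecidableEq V] : #(G.adjPairs S S) = 2 * mE G S S :=
  card_eq_two_mul_card_image_pair (fun _ hp => G.ne_of_adj (mem_adjPairs.1 hp).2.2)
    fun _ hp => by simp_all [G.adj_comm]

end PairCounts

section EdgeClasses

variable [Fintype V] [DecidableEq V] {G : SimpleGraph V} [DecidableRel G.Adj] {u v : V}

@[simp]
theorem mem_eX {w : V} : w ∈ eX G u v ↔ w ≠ v ∧ G.Adj u w ∧ ¬ G.Adj v w := by
  simp [eX]

@[simp]
theorem mem_eZ {w : V} : w ∈ eZ G u v ↔ G.Adj u w ∧ G.Adj v w := by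
  simp [eZ]

theorem mem_adjW_pair {w : V} :
    w ∈ adjW G {u, v} ↔ w ≠ u ∧ w ≠ v ∧ (G.Adj u w ∨ G.Adj v w) := by
  simp only [adjW, mem_filter, mem_univ, true_and, mem_insert, mem_singleton,
    exists_eq_or_imp, exists_eq_left, G.adj_comm w]
  tauto

variable (G u v)

theorem eY_eq_eX_swap : eY G u v = eX G v u := rfl

theorem eZ_comm : eZ G u v = eZ G v u := by
  ext; simp [and_comm]

theorem disjoint_eX_eZ : Disjoint (eX G u v) (eZ G u v) :=
  Finset.disjoint_left.2 fun _ hX hZ => (mem_eX.1 hX).2.2 (mem_eZ.1 hZ).2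

end EdgeClasses

section TailedPairs

variable [Fintype V] [DecidableEq V] (G : SimpleGraph V) [DecidableRel G.Adj] (u v : V)

/-- The ordered pairs `(p₁, p₂)` for which `{u, v, p₁, p₂}` induces a tailed triangle whose
vertex of degree three is `u`. -/
def apexPairs : Finset (V × V) :=
  G.nonAdjPairs (eX G u v) (eZ G u v) ∪ G.nonAdjPairs (eZ G u v) (eX G u v) ∪
    G.adjPairs (eX G u v) (eX G u v)

theorem card_apexPairs :
    #(G.apexPairs u v) + 2 * mE G (eX G u v) (eZ G u v)
      = 2 * (#(eX G u v) * #(eZ G u v)) + 2 * mE G (eX G u v) (eX G u v) := by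
  have hXZ := G.disjoint_eX_eZ u v
  rw [apexPairs, card_union_of_disjoint, card_union_of_disjoint,
    card_nonAdjPairs_comm G (eZ G u v), card_adjPairs_self, G.mE_eq_card_adjPairs _ _ hXZ]
  · linarith [G.card_adjPairs_add_card_nonAdjPairs (eX G u v) (eZ G u v)]
  · exact (disjoint_product.2 (.inl hXZ)).mono nonAdjPairs_subset nonAdjPairs_subset
  · exact disjoint_union_left.2
      ⟨(disjoint_product.2 (.inr hXZ.symm)).mono nonAdjPairs_subset adjPairs_subset,
        (disjoint_product.2 (.inl hXZ.symm)).mono nonAdjPairs_subset adjPairs_subset⟩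

theorem disjoint_apexPairs : Disjoint (G.apexPairs u v) (G.apexPairs v u) := by
  rw [Finset.disjoint_left]
  rintro ⟨p₁, p₂⟩ huv hvu
  simp only [apexPairs, mem_union, mem_nonAdjPairs, mem_adjPairs, mem_eX, mem_eZ] at huv hvu
  tauto

def tailedPairs : Finset (V × V) :=
  ((adjW G {u, v}) ×ˢ (adjW G {u, v})).filter fun p =>
    p.1 ≠ p.2 ∧
    ∃ a b c d : V, ({a, b, c, d} : Finset V) = {u, v, p.1, p.2} ∧
      G.Adj a b ∧ G.Adj a c ∧ G.Adj b c ∧ G.Adj a d ∧ ¬ G.Adj b d ∧ ¬ G.Adj c d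

theorem tailedPairs_comm : G.tailedPairs u v = G.tailedPairs v u := by
  simp_rw [tailedPairs, pair_comm u v, insert_comm u v]

variable {G u v} in
theorem swap_mem_tailedPairs {p : V × V} (hp : p ∈ G.tailedPairs u v) :
    p.swap ∈ G.tailedPairs u v := by
  simp only [tailedPairs, mem_filter, mem_product] at hp ⊢
  obtain ⟨⟨h₁, h₂⟩, hne, hT⟩ := hp
  refine ⟨⟨h₂, h₁⟩, hne.symm, ?_⟩
  simpa only [Prod.fst_swap, Prod.snd_swap, pair_comm p.2] using hT

theorem apexPairs_subset_tailedPairs (huv : G.Adj u v) : G.apexPairs u v ⊆ G.tailedPairs u v := by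
  have hX : eX G u v ⊆ adjW G {u, v} := fun w hw =>
    have ⟨hwv, huw, _⟩ := mem_eX.1 hw
    mem_adjW_pair.2 ⟨huw.ne', hwv, .inl huw⟩
  have hZ : eZ G u v ⊆ adjW G {u, v} := fun w hw =>
    have ⟨huw, hvw⟩ := mem_eZ.1 hw
    mem_adjW_pair.2 ⟨huw.ne', hvw.ne', .inl huw⟩
  have hZX_sub : G.nonAdjPairs (eZ G u v) (eX G u v) ⊆ G.tailedPairs u v := by
    rintro ⟨z, x⟩ hp
    obtain ⟨hz, hx, hzx⟩ := mem_nonAdjPairs.1 hp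
    obtain ⟨huz, hvz⟩ := mem_eZ.1 hz
    obtain ⟨-, hux, hvx⟩ := mem_eX.1 hx
    exact mem_filter.2 ⟨mem_product.2 ⟨hZ hz, hX hx⟩, fun h => hvx (h ▸ hvz),
      u, v, z, x, rfl, huv, huz, hvz, hux, hvx, hzx⟩
  intro p hp
  simp only [apexPairs, mem_union] at hp
  rcases hp with (hXZ | hZX) | hXX
  · refine swap_mem_tailedPairs (p := p.swap) (hZX_sub ?_)
    simp only [mem_nonAdjPairs, Prod.fst_swap, Prod.snd_swap] at hXZ ⊢
    exact ⟨hXZ.2.1, hXZ.1, fun h => hXZ.2.2 h.symm⟩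
  · exact hZX_sub hZX
  · obtain ⟨h₁, h₂, h₁₂⟩ := mem_adjPairs.1 hXX
    obtain ⟨-, hu₁, hv₁⟩ := mem_eX.1 h₁
    obtain ⟨-, hu₂, hv₂⟩ := mem_eX.1 h₂
    refine mem_filter.2 ⟨mem_product.2 ⟨hX h₁, hX h₂⟩, h₁₂.ne, u, p.1, p.2, v, ?_,
      hu₁, hu₂, h₁₂, huv, fun h => hv₁ h.symm, fun h => hv₂ h.symm⟩
    ext; simp only [mem_insert, mem_singleton]; tauto

theorem tailedPairs_subset_apexPairs_union (huv : G.Adj u v) :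
    G.tailedPairs u v ⊆ G.apexPairs u v ∪ G.apexPairs v u := by
  rintro ⟨p₁, p₂⟩ hp
  simp only [tailedPairs, mem_filter, mem_product, mem_adjW_pair] at hp
  obtain ⟨⟨⟨h₁u, h₁v, h₁⟩, ⟨h₂u, h₂v, h₂⟩⟩, h₁₂, a, b, c, d, hset, hab, hac, hbc, had, hbd, hcd⟩ :=
    hp
  have hmem : ∀ w ∈ ({u, v, p₁, p₂} : Finset V), w = a ∨ w = b ∨ w = c ∨ w = d := by
    intro w hw
    rw [← hset] at hw
    simpa using hw
  have hne := huv.ne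
  simp only [apexPairs, mem_union, mem_nonAdjPairs, mem_adjPairs, mem_eX, mem_eZ]
  -- each of `u, v, p₁, p₂` is one of `a, b, c, d`; coincidences contradict distinctness
  rcases hmem u (by simp) with rfl | rfl | rfl | rfl <;>
  rcases hmem v (by simp) with rfl | rfl | rfl | rfl <;>
  rcases hmem p₁ (by simp) with rfl | rfl | rfl | rfl <;>
  rcases hmem p₂ (by simp) with rfl | rfl | rfl | rfl <;>
  first | contradiction | simp_all [G.adj_comm]

theorem tailedPairs_eq_union (huv : G.Adj u v) :
    G.tailedPairs u v = G.apexPairs u v ∪ G.apexPairs v u :=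
  (G.tailedPairs_subset_apexPairs_union u v huv).antisymm <|
    union_subset (G.apexPairs_subset_tailedPairs u v huv)
      (G.tailedPairs_comm u v ▸ G.apexPairs_subset_tailedPairs v u huv.symm)

theorem card_image_tailedPairs (huv : G.Adj u v) :
    #((G.tailedPairs u v).image fun p => ({p.1, p.2} : Finset V))
        + mE G (eX G u v) (eZ G u v) + mE G (eY G u v) (eZ G u v)
      = (#(eX G u v) + #(eY G u v)) * #(eZ G u v)
        + mE G (eX G u v) (eX G u v) + mE G (eY G u v) (eY G u v) := by
  have htwo := card_eq_two_mul_card_image_pair (s := G.tailedPairs u v)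
    (fun _ hp => (mem_filter.1 hp).2.1) fun _ => swap_mem_tailedPairs
  have hsplit : #(G.tailedPairs u v) = #(G.apexPairs u v) + #(G.apexPairs v u) := by
    rw [G.tailedPairs_eq_union u v huv, card_union_of_disjoint (G.disjoint_apexPairs u v)]
  have hu := G.card_apexPairs u v
  have hv := G.card_apexPairs v u
  rw [← eY_eq_eX_swap, eZ_comm G v u] at hv
  linarith

end TailedPairs

end SimpleGraph

/-- Theorem 2, Table 3, tailed-triangle row: the number of unordered pairs
`{v₁,v₂} ⊆ adj({u,v})` such that the induced subgraph on `{u,v,v₁,v₂}` is a tailed triangle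
(a triangle plus a pendant vertex attached to one triangle vertex) equals
`(n_x + n_y)·n_z − m(X,Z) − m(Y,Z) + m(X,X) + m(Y,Y)`. -/
theorem stmt8 [Fintype V] [DecidableEq V] (G : SimpleGraph V) [DecidableRel G.Adj]
    (u v : V) (huv : G.Adj u v) :
    (((((adjW G {u, v}) ×ˢ (adjW G {u, v})).filter fun p =>
        p.1 ≠ p.2 ∧
        ∃ a b c d : V, ({a, b, c, d} : Finset V) = {u, v, p.1, p.2} ∧
          G.Adj a b ∧ G.Adj a c ∧ G.Adj b c ∧ G.Adj a d ∧ ¬ G.Adj b d ∧ ¬ G.Adj c d).image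
      fun p => ({p.1, p.2} : Finset V)).card : ℤ)
      = (((eX G u v).card : ℤ) + (eY G u v).card) * (eZ G u v).card
        - mE G (eX G u v) (eZ G u v) - mE G (eY G u v) (eZ G u v)
        + mE G (eX G u v) (eX G u v) + mE G (eY G u v) (eY G u v) := by
  have h := G.card_image_tailedPairs u v huv
  unfold SimpleGraph.tailedPairs at h
  linarith
end

section
/- Let e={u,v} be an edge of a finite simple undirected graph G. The number of unordered pairs {v1,v2} ⊆ adj({u,v}) such that the subgraph induced on {u,v,v1,v2} is a star K_{1,3} (a claw, centered at u or at v) equals C(n_x,2) + C(n_y,2) − m(X,X) − m(Y,Y) (Theorem 2, Table 3, S3 row). -/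
open Finset

variable {V : Type*}

lemma pair_eq_cases [DecidableEq V] {a b c d : V} (hab : a ≠ b)
    (h : ({a, b} : Finset V) = {c, d}) : (a = c ∧ b = d) ∨ (a = d ∧ b = c) := by
  have ha : a = c ∨ a = d := by
    have : a ∈ ({c, d} : Finset V) := h ▸ by simp
    simpa using this
  have hb : b = c ∨ b = d := by
    have : b ∈ ({c, d} : Finset V) := h ▸ by simp
    simpa using this
  rcases ha with h1 | h1 <;> rcases hb with h2 | h2
  · exact absurd (h1.trans h2.symm) hab
  · exact Or.inl ⟨h1, h2⟩
  · exact Or.inr ⟨h1, h2⟩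
  · exact absurd (h1.trans h2.symm) hab

/-- nonadjacent distinct pairs within `S`. -/
def pairsNon [DecidableEq V] (G : SimpleGraph V) [DecidableRel G.Adj] (S : Finset V) :
    Finset (Finset V) :=
  ((S ×ˢ S).filter fun p => p.1 ≠ p.2 ∧ ¬ G.Adj p.1 p.2).image fun p => ({p.1, p.2} : Finset V)


lemma pairsNon_card [DecidableEq V] (G : SimpleGraph V) [DecidableRel G.Adj] (S : Finset V) :
    (pairsNon G S).card + mE G S S = Nat.choose S.card 2 := by
  set A := ((S ×ˢ S).filter fun p => G.Adj p.1 p.2).image fun p => ({p.1, p.2} : Finset V) with hA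
  have hdisj : Disjoint (pairsNon G S) A := by
    rw [Finset.disjoint_left]
    intro t ht ht'
    obtain ⟨⟨a, b⟩, hm, rfl⟩ := mem_image.mp ht
    obtain ⟨⟨c, d⟩, hm', heq⟩ := mem_image.mp ht'
    rw [mem_filter] at hm hm'
    rcases pair_eq_cases hm.2.1 heq.symm with ⟨h1, h2⟩ | ⟨h1, h2⟩
    · subst h1; subst h2; exact hm.2.2 hm'.2
    · subst h1; subst h2; exact hm.2.2 hm'.2.symm
  have hun : pairsNon G S ∪ A = S.powersetCard 2 := by
    ext t
    constructor
    · intro ht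
      rcases mem_union.mp ht with h | h
      · obtain ⟨⟨a, b⟩, hm, rfl⟩ := mem_image.mp h
        rw [mem_filter, mem_product] at hm
        rw [mem_powersetCard]
        exact ⟨insert_subset hm.1.1 (by simpa using hm.1.2), card_pair hm.2.1⟩
      · obtain ⟨⟨a, b⟩, hm, rfl⟩ := mem_image.mp h
        rw [mem_filter, mem_product] at hm
        rw [mem_powersetCard]
        exact ⟨insert_subset hm.1.1 (by simpa using hm.1.2), card_pair hm.2.ne⟩
    · intro ht
      rw [mem_powersetCard] at ht
      obtain ⟨a, b, hab, rfl⟩ := Finset.card_eq_two.mp ht.2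
      have ha : a ∈ S := ht.1 (by simp)
      have hb : b ∈ S := ht.1 (by simp)
      by_cases hadj : G.Adj a b
      · exact mem_union_right _ (mem_image.mpr ⟨(a, b),
          mem_filter.mpr ⟨mem_product.mpr ⟨ha, hb⟩, hadj⟩, rfl⟩)
      · exact mem_union_left _ (mem_image.mpr ⟨(a, b),
          mem_filter.mpr ⟨mem_product.mpr ⟨ha, hb⟩, hab, hadj⟩, rfl⟩)
  have := Finset.card_union_of_disjoint hdisj
  rw [hun, Finset.card_powersetCard] at this
  rw [mE, ← hA]
  omega

lemma claw_char [DecidableEq V] (G : SimpleGraph V) {u v a b c s₁ s₂ s₃ : V} (huv : G.Adj u v)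
    (hau : a ≠ u) (hav : a ≠ v) (hbu : b ≠ u) (hbv : b ≠ v) (hab : a ≠ b)
    (hset : ({c, s₁, s₂, s₃} : Finset V) = {u, v, a, b})
    (h1 : G.Adj c s₁) (h2 : G.Adj c s₂) (h3 : G.Adj c s₃)
    (h4 : ¬ G.Adj s₁ s₂) (h5 : ¬ G.Adj s₁ s₃) (h6 : ¬ G.Adj s₂ s₃) :
    (G.Adj u a ∧ G.Adj u b ∧ ¬ G.Adj v a ∧ ¬ G.Adj v b ∧ ¬ G.Adj a b) ∨
    (G.Adj v a ∧ G.Adj v b ∧ ¬ G.Adj u a ∧ ¬ G.Adj u b ∧ ¬ G.Adj a b) := by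
  have hm : ∀ x : V, x ∈ ({u, v, a, b} : Finset V) → x = c ∨ x = s₁ ∨ x = s₂ ∨ x = s₃ := by
    intro x hx
    rw [← hset] at hx
    simpa using hx
  have hc : c = u ∨ c = v ∨ c = a ∨ c = b := by
    have : c ∈ ({u, v, a, b} : Finset V) := hset ▸ by simp
    simpa using this
  have hadjL : ∀ x : V, (x = s₁ ∨ x = s₂ ∨ x = s₃) → G.Adj c x := by
    rintro x (rfl | rfl | rfl) <;> assumption
  have hnonL : ∀ x y : V, (x = s₁ ∨ x = s₂ ∨ x = s₃) → (y = s₁ ∨ y = s₂ ∨ y = s₃) →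
      x ≠ y → ¬ G.Adj x y := by
    rintro x y (rfl | rfl | rfl) (rfl | rfl | rfl) hxy hadj
    · exact hxy rfl
    · exact h4 hadj
    · exact h5 hadj
    · exact h4 hadj.symm
    · exact hxy rfl
    · exact h6 hadj
    · exact h5 hadj.symm
    · exact h6 hadj.symm
    · exact hxy rfl
  rcases hc with rfl | rfl | rfl | rfl
  · -- c = u
    have hv : v = s₁ ∨ v = s₂ ∨ v = s₃ := (hm v (by simp)).resolve_left huv.ne'
    have ha : a = s₁ ∨ a = s₂ ∨ a = s₃ := (hm a (by simp)).resolve_left hau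
    have hb : b = s₁ ∨ b = s₂ ∨ b = s₃ := (hm b (by simp)).resolve_left hbu
    exact Or.inl ⟨hadjL a ha, hadjL b hb, hnonL v a hv ha (Ne.symm hav),
      hnonL v b hv hb (Ne.symm hbv), hnonL a b ha hb hab⟩
  · -- c = v
    have hu : u = s₁ ∨ u = s₂ ∨ u = s₃ := (hm u (by simp)).resolve_left huv.ne
    have ha : a = s₁ ∨ a = s₂ ∨ a = s₃ := (hm a (by simp)).resolve_left hav
    have hb : b = s₁ ∨ b = s₂ ∨ b = s₃ := (hm b (by simp)).resolve_left hbv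
    exact Or.inr ⟨hadjL a ha, hadjL b hb, hnonL u a hu ha (Ne.symm hau),
      hnonL u b hu hb (Ne.symm hbu), hnonL a b ha hb hab⟩
  · -- c = a
    have hu : u = s₁ ∨ u = s₂ ∨ u = s₃ := (hm u (by simp)).resolve_left hau.symm
    have hv : v = s₁ ∨ v = s₂ ∨ v = s₃ := (hm v (by simp)).resolve_left hav.symm
    exact absurd huv (hnonL u v hu hv huv.ne)
  · -- c = b
    have hu : u = s₁ ∨ u = s₂ ∨ u = s₃ := (hm u (by simp)).resolve_left hbu.symm
    have hv : v = s₁ ∨ v = s₂ ∨ v = s₃ := (hm v (by simp)).resolve_left hbv.symm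
    exact absurd huv (hnonL u v hu hv huv.ne)

/-- Theorem 2, Table 3, `S₃` row: the number of unordered pairs `{v₁,v₂} ⊆ adj({u,v})` such
that the induced subgraph on `{u,v,v₁,v₂}` is a star `K_{1,3}` (a claw) equals
`C(n_x,2) + C(n_y,2) − m(X,X) − m(Y,Y)`. -/
theorem stmt9 [Fintype V] [DecidableEq V] (G : SimpleGraph V) [DecidableRel G.Adj]
    (u v : V) (huv : G.Adj u v) :
    (((((adjW G {u, v}) ×ˢ (adjW G {u, v})).filter fun p =>
        p.1 ≠ p.2 ∧
        ∃ c s₁ s₂ s₃ : V, ({c, s₁, s₂, s₃} : Finset V) = {u, v, p.1, p.2} ∧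
          G.Adj c s₁ ∧ G.Adj c s₂ ∧ G.Adj c s₃ ∧
          ¬ G.Adj s₁ s₂ ∧ ¬ G.Adj s₁ s₃ ∧ ¬ G.Adj s₂ s₃).image
      fun p => ({p.1, p.2} : Finset V)).card : ℤ)
      = (Nat.choose (eX G u v).card 2 : ℤ) + Nat.choose (eY G u v).card 2
        - mE G (eX G u v) (eX G u v) - mE G (eY G u v) (eY G u v) := by
  have hXmem : ∀ x, x ∈ eX G u v ↔ (x ≠ v ∧ G.Adj u x ∧ ¬ G.Adj v x) := by
    intro x; simp [eX]
  have hYmem : ∀ x, x ∈ eY G u v ↔ (x ≠ u ∧ G.Adj v x ∧ ¬ G.Adj u x) := by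
    intro x; simp [eY]
  have hAmem : ∀ x, x ∈ adjW G ({u, v} : Finset V) ↔
      ((x ≠ u ∧ x ≠ v) ∧ ∃ w ∈ ({u, v} : Finset V), G.Adj x w) := by
    intro x; simp [adjW]
  have himg : ((((adjW G {u, v}) ×ˢ (adjW G {u, v})).filter fun p =>
        p.1 ≠ p.2 ∧
        ∃ c s₁ s₂ s₃ : V, ({c, s₁, s₂, s₃} : Finset V) = {u, v, p.1, p.2} ∧
          G.Adj c s₁ ∧ G.Adj c s₂ ∧ G.Adj c s₃ ∧
          ¬ G.Adj s₁ s₂ ∧ ¬ G.Adj s₁ s₃ ∧ ¬ G.Adj s₂ s₃).image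
      fun p => ({p.1, p.2} : Finset V))
      = pairsNon G (eX G u v) ∪ pairsNon G (eY G u v) := by
    ext t
    constructor
    · intro ht
      obtain ⟨⟨a, b⟩, hm, rfl⟩ := mem_image.mp ht
      rw [mem_filter, mem_product] at hm
      obtain ⟨⟨ha, hb⟩, hab, c, s₁, s₂, s₃, hset, h1, h2, h3, h4, h5, h6⟩ := hm
      obtain ⟨⟨hau, hav⟩, -⟩ := (hAmem a).mp ha
      obtain ⟨⟨hbu, hbv⟩, -⟩ := (hAmem b).mp hb
      rcases claw_char G huv hau hav hbu hbv hab hset h1 h2 h3 h4 h5 h6 with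
        ⟨p1, p2, p3, p4, p5⟩ | ⟨p1, p2, p3, p4, p5⟩
      · exact mem_union_left _ (mem_image.mpr ⟨(a, b), mem_filter.mpr
          ⟨mem_product.mpr ⟨(hXmem a).mpr ⟨hav, p1, p3⟩, (hXmem b).mpr ⟨hbv, p2, p4⟩⟩,
            hab, p5⟩, rfl⟩)
      · exact mem_union_right _ (mem_image.mpr ⟨(a, b), mem_filter.mpr
          ⟨mem_product.mpr ⟨(hYmem a).mpr ⟨hau, p1, p3⟩, (hYmem b).mpr ⟨hbu, p2, p4⟩⟩,
            hab, p5⟩, rfl⟩)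
    · intro ht
      rcases mem_union.mp ht with h | h
      · obtain ⟨⟨a, b⟩, hm, rfl⟩ := mem_image.mp h
        rw [mem_filter, mem_product] at hm
        obtain ⟨⟨ha, hb⟩, hab, hnadj⟩ := hm
        obtain ⟨hav, hua, hva⟩ := (hXmem a).mp ha
        obtain ⟨hbv, hub, hvb⟩ := (hXmem b).mp hb
        refine mem_image.mpr ⟨(a, b), mem_filter.mpr ⟨mem_product.mpr
          ⟨(hAmem a).mpr ⟨⟨hua.ne', hav⟩, u, by simp, hua.symm⟩,
           (hAmem b).mpr ⟨⟨hub.ne', hbv⟩, u, by simp, hub.symm⟩⟩,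
          hab, u, v, a, b, rfl, huv, hua, hub, hva, hvb, hnadj⟩, rfl⟩
      · obtain ⟨⟨a, b⟩, hm, rfl⟩ := mem_image.mp h
        rw [mem_filter, mem_product] at hm
        obtain ⟨⟨ha, hb⟩, hab, hnadj⟩ := hm
        obtain ⟨hau, hva, hua⟩ := (hYmem a).mp ha
        obtain ⟨hbu, hvb, hub⟩ := (hYmem b).mp hb
        refine mem_image.mpr ⟨(a, b), mem_filter.mpr ⟨mem_product.mpr
          ⟨(hAmem a).mpr ⟨⟨hau, hva.ne'⟩, v, by simp, hva.symm⟩,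
           (hAmem b).mpr ⟨⟨hbu, hvb.ne'⟩, v, by simp, hvb.symm⟩⟩,
          hab, v, u, a, b, Finset.insert_comm v u {a, b}, huv.symm, hva, hvb, hua, hub,
          hnadj⟩, rfl⟩
  have hdisj : Disjoint (pairsNon G (eX G u v)) (pairsNon G (eY G u v)) := by
    rw [Finset.disjoint_left]
    intro t ht ht'
    obtain ⟨⟨a, b⟩, hm, rfl⟩ := mem_image.mp ht
    obtain ⟨⟨c, d⟩, hm', heq⟩ := mem_image.mp ht'
    rw [mem_filter, mem_product] at hm hm'
    have hc : c ∈ eY G u v := hm'.1.1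
    have hd : d ∈ eY G u v := hm'.1.2
    have haX : a ∈ eX G u v := hm.1.1
    rcases pair_eq_cases hm.2.1 heq.symm with ⟨h1, h2⟩ | ⟨h1, h2⟩
    · subst h1
      exact ((hXmem a).mp haX).2.2 ((hYmem a).mp hc).2.1
    · subst h1
      exact ((hXmem a).mp haX).2.2 ((hYmem a).mp hd).2.1
  rw [himg, Finset.card_union_of_disjoint hdisj]
  have h1 := pairsNon_card G (eX G u v)
  have h2 := pairsNon_card G (eY G u v)
  have h1' := congrArg (Nat.cast : ℕ → ℤ) h1
  have h2' := congrArg (Nat.cast : ℕ → ℤ) h2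
  push_cast at h1' h2' ⊢
  linarith
end

section
/- Let e={u,v} be an edge of a finite simple undirected graph G. The number of unordered pairs {v1,v2} ⊆ adj({u,v}) such that the subgraph induced on {u,v,v1,v2} is the complete graph K4 minus one edge (the diamond graph) equals C(n_z,2) + m(X,Z) + m(Y,Z) − m(Z,Z) (Theorem 2, Table 3, K4∖{e} row). -/
open Finset

variable {V : Type*}

lemma card_le_three' [DecidableEq V] (x y z : V) : ({x,y,z}:Finset V).card ≤ 3 := by
  have h1 := Finset.card_insert_le x ({y,z}:Finset V)
  have h2 := Finset.card_insert_le y ({z}:Finset V)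
  have h3 : ({z}:Finset V).card = 1 := Finset.card_singleton z
  omega

lemma four_ne' [DecidableEq V] {a b c d : V} (h : ({a,b,c,d}:Finset V).card = 4) :
    a≠b ∧ a≠c ∧ a≠d ∧ b≠c ∧ b≠d ∧ c≠d := by
  refine ⟨?_,?_,?_,?_,?_,?_⟩ <;> rintro rfl
  · have e : ({a,a,c,d}:Finset V) = {a,c,d} := by ext x; simp; try tauto
    rw [e] at h; have := card_le_three' a c d; omega
  · have e : ({a,b,a,d}:Finset V) = {a,b,d} := by ext x; simp; try tauto
    rw [e] at h; have := card_le_three' a b d; omega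
  · have e : ({a,b,c,a}:Finset V) = {a,b,c} := by ext x; simp; try tauto
    rw [e] at h; have := card_le_three' a b c; omega
  · have e : ({a,b,b,d}:Finset V) = {a,b,d} := by ext x; simp; try tauto
    rw [e] at h; have := card_le_three' a b d; omega
  · have e : ({a,b,c,b}:Finset V) = {a,b,c} := by ext x; simp; try tauto
    rw [e] at h; have := card_le_three' a b c; omega
  · have e : ({a,b,c,c}:Finset V) = {a,b,c} := by ext x; simp; try tauto
    rw [e] at h; have := card_le_three' a b c; omega

lemma pair_eq' [DecidableEq V] {a b c d : V} (h : ({a,b}:Finset V) = ({c,d}:Finset V)) (hab : a ≠ b) :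
    (a=c∧b=d)∨(a=d∧b=c) := by
  have h1 : a ∈ ({c,d}:Finset V) := h ▸ (by simp)
  have h2 : b ∈ ({c,d}:Finset V) := h ▸ (by simp)
  have h3 : c ∈ ({a,b}:Finset V) := h ▸ (by simp)
  simp at h1 h2 h3
  rcases h1 with rfl|rfl <;> rcases h2 with rfl|rfl <;> tauto

set_option maxHeartbeats 1000000 in
lemma key' [DecidableEq V] (G : SimpleGraph V) [DecidableRel G.Adj] {u v v1 v2 a b c d : V}
    (huv : G.Adj u v) (h12 : v1 ≠ v2) (h1u : v1 ≠ u) (h1v : v1 ≠ v) (h2u : v2 ≠ u) (h2v : v2 ≠ v)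
    (hset : ({a,b,c,d}:Finset V) = {u,v,v1,v2})
    (nab : ¬G.Adj a b) (hac : G.Adj a c) (had : G.Adj a d)
    (hbc : G.Adj b c) (hbd : G.Adj b d) (hcd : G.Adj c d) :
    (G.Adj u v1 ∧ G.Adj v v1 ∧ G.Adj u v2 ∧ G.Adj v v2 ∧ ¬G.Adj v1 v2) ∨
    (¬G.Adj v v1 ∧ G.Adj u v1 ∧ G.Adj u v2 ∧ G.Adj v v2 ∧ G.Adj v1 v2) ∨
    (¬G.Adj v v2 ∧ G.Adj u v2 ∧ G.Adj u v1 ∧ G.Adj v v1 ∧ G.Adj v1 v2) ∨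
    (¬G.Adj u v1 ∧ G.Adj v v1 ∧ G.Adj u v2 ∧ G.Adj v v2 ∧ G.Adj v1 v2) ∨
    (¬G.Adj u v2 ∧ G.Adj v v2 ∧ G.Adj u v1 ∧ G.Adj v v1 ∧ G.Adj v1 v2) := by
  have e1 : v1 ∉ ({v2}:Finset V) := by simp [h12]
  have e2 : v ∉ ({v1,v2}:Finset V) := by simp [Ne.symm h1v, Ne.symm h2v]
  have e3 : u ∉ ({v,v1,v2}:Finset V) := by simp [huv.ne, Ne.symm h1u, Ne.symm h2u]
  have hcard4 : ({u,v,v1,v2}:Finset V).card = 4 := by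
    rw [Finset.card_insert_of_notMem e3, Finset.card_insert_of_notMem e2,
      Finset.card_insert_of_notMem e1, Finset.card_singleton]
  have hcc : ({a,b,c,d}:Finset V).card = 4 := by rw [hset]; exact hcard4
  obtain ⟨nab2, nac2, nad2, nbc2, nbd2, ncd2⟩ := four_ne' hcc
  have ha : a = u ∨ a = v ∨ a = v1 ∨ a = v2 := by
    have : a ∈ ({u,v,v1,v2}:Finset V) := hset ▸ (by simp)
    simpa using this
  have hb : b = u ∨ b = v ∨ b = v1 ∨ b = v2 := by
    have : b ∈ ({u,v,v1,v2}:Finset V) := hset ▸ (by simp)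
    simpa using this
  have hcm : c = u ∨ c = v ∨ c = v1 ∨ c = v2 := by
    have : c ∈ ({u,v,v1,v2}:Finset V) := hset ▸ (by simp)
    simpa using this
  have hdm : d = u ∨ d = v ∨ d = v1 ∨ d = v2 := by
    have : d ∈ ({u,v,v1,v2}:Finset V) := hset ▸ (by simp)
    simpa using this
  have hca := hac.symm
  have hda := had.symm
  have hcb := hbc.symm
  have hdb := hbd.symm
  have hdc := hcd.symm
  have nba : ¬ G.Adj b a := fun h => nab h.symm
  have hvu := huv.symm
  rcases ha with rfl|rfl|rfl|rfl <;> rcases hb with rfl|rfl|rfl|rfl <;>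
    rcases hcm with rfl|rfl|rfl|rfl <;> rcases hdm with rfl|rfl|rfl|rfl <;>
    first
    | exact absurd rfl (by assumption)
    | itauto


/-- Theorem 2, Table 3, `K₄∖{e}` row: the number of unordered pairs `{v₁,v₂} ⊆ adj({u,v})`
such that the induced subgraph on `{u,v,v₁,v₂}` is `K₄` minus one edge (the diamond) equals
`C(n_z,2) + m(X,Z) + m(Y,Z) − m(Z,Z)`. -/
theorem stmt10 [Fintype V] [DecidableEq V] (G : SimpleGraph V) [DecidableRel G.Adj]
    (u v : V) (huv : G.Adj u v) :
    (((((adjW G {u, v}) ×ˢ (adjW G {u, v})).filter fun p =>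
        p.1 ≠ p.2 ∧
        ∃ a b c d : V, ({a, b, c, d} : Finset V) = {u, v, p.1, p.2} ∧
          ¬ G.Adj a b ∧ G.Adj a c ∧ G.Adj a d ∧ G.Adj b c ∧ G.Adj b d ∧ G.Adj c d).image
      fun p => ({p.1, p.2} : Finset V)).card : ℤ)
      = (Nat.choose (eZ G u v).card 2 : ℤ)
        + mE G (eX G u v) (eZ G u v) + mE G (eY G u v) (eZ G u v)
        - mE G (eZ G u v) (eZ G u v) := by
  have hmain : ((((adjW G {u, v}) ×ˢ (adjW G {u, v})).filter fun p =>
        p.1 ≠ p.2 ∧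
        ∃ a b c d : V, ({a, b, c, d} : Finset V) = {u, v, p.1, p.2} ∧
          ¬ G.Adj a b ∧ G.Adj a c ∧ G.Adj a d ∧ G.Adj b c ∧ G.Adj b d ∧ G.Adj c d).image
      fun p => ({p.1, p.2} : Finset V))
      = ((((eZ G u v) ×ˢ (eZ G u v)).filter fun p => p.1 ≠ p.2 ∧ ¬G.Adj p.1 p.2).image
          fun p => ({p.1, p.2} : Finset V))
        ∪ ((((eX G u v) ×ˢ (eZ G u v)).filter fun p => G.Adj p.1 p.2).image
          fun p => ({p.1, p.2} : Finset V))
        ∪ ((((eY G u v) ×ˢ (eZ G u v)).filter fun p => G.Adj p.1 p.2).image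
          fun p => ({p.1, p.2} : Finset V)) := by

    ext s
    simp only [Finset.mem_union, Finset.mem_image, Finset.mem_filter, Finset.mem_product,
      Finset.mem_univ, true_and, eZ, eX, eY, adjW, Prod.exists, Finset.mem_insert,
      Finset.mem_singleton, not_or]
    constructor
    · rintro ⟨p1, p2, ⟨⟨⟨⟨h1u, h1v⟩, hadj1⟩, ⟨h2u, h2v⟩, hadj2⟩, hne, a, b, c, d, hset, nab, hac, had, hbc, hbd, hcd⟩, rfl⟩
      have hk := key' G huv hne h1u h1v h2u h2v hset nab hac had hbc hbd hcd
      rcases hk with ⟨k1,k2,k3,k4,k5⟩|⟨k1,k2,k3,k4,k5⟩|⟨k1,k2,k3,k4,k5⟩|⟨k1,k2,k3,k4,k5⟩|⟨k1,k2,k3,k4,k5⟩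
      · exact Or.inl (Or.inl ⟨p1, p2, ⟨⟨⟨k1,k2⟩,k3,k4⟩,hne,k5⟩, rfl⟩)
      · exact Or.inl (Or.inr ⟨p1, p2, ⟨⟨⟨h1v,k2,k1⟩,k3,k4⟩,k5⟩, rfl⟩)
      · exact Or.inl (Or.inr ⟨p2, p1, ⟨⟨⟨h2v,k2,k1⟩,k3,k4⟩,k5.symm⟩, Finset.pair_comm p2 p1⟩)
      · exact Or.inr ⟨p1, p2, ⟨⟨⟨h1u,k2,k1⟩,k3,k4⟩,k5⟩, rfl⟩
      · exact Or.inr ⟨p2, p1, ⟨⟨⟨h2u,k2,k1⟩,k3,k4⟩,k5.symm⟩, Finset.pair_comm p2 p1⟩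
    · rintro ((⟨z1,z2,⟨⟨⟨hz1u,hz1v⟩,hz2u,hz2v⟩,hne,hnadj⟩,rfl⟩ |
          ⟨x,z,⟨⟨⟨hxv,hxu,hxnv⟩,hzu,hzv⟩,hadj⟩,rfl⟩) |
          ⟨y,z,⟨⟨⟨hyu,hyv,hynu⟩,hzu,hzv⟩,hadj⟩,rfl⟩)
      · refine ⟨z1, z2, ⟨⟨⟨⟨hz1u.ne', hz1v.ne'⟩, ⟨u, Or.inl rfl, hz1u.symm⟩⟩,
          ⟨⟨hz2u.ne', hz2v.ne'⟩, ⟨u, Or.inl rfl, hz2u.symm⟩⟩⟩, hne,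
          z1, z2, u, v, ?_, hnadj, hz1u.symm, hz1v.symm, hz2u.symm, hz2v.symm, huv⟩, rfl⟩
        ext w; simp [Finset.mem_insert]; tauto
      · refine ⟨x, z, ⟨⟨⟨⟨hxu.ne', hxv⟩, ⟨u, Or.inl rfl, hxu.symm⟩⟩,
          ⟨⟨hzu.ne', hzv.ne'⟩, ⟨u, Or.inl rfl, hzu.symm⟩⟩⟩, hadj.ne,
          v, x, u, z, ?_, hxnv, huv.symm, hzv, hxu.symm, hadj, hzu⟩, rfl⟩
        ext w; simp [Finset.mem_insert]; tauto
      · refine ⟨y, z, ⟨⟨⟨⟨hyu, hyv.ne'⟩, ⟨v, Or.inr rfl, hyv.symm⟩⟩,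
          ⟨⟨hzu.ne', hzv.ne'⟩, ⟨u, Or.inl rfl, hzu.symm⟩⟩⟩, hadj.ne,
          u, y, v, z, ?_, hynu, huv, hzu, hyv.symm, hadj, hzv⟩, rfl⟩
        ext w; simp [Finset.mem_insert]; tauto
  rw [hmain]
  set A := ((((eZ G u v) ×ˢ (eZ G u v)).filter fun p => p.1 ≠ p.2 ∧ ¬G.Adj p.1 p.2).image
      fun p => ({p.1, p.2} : Finset V)) with hAdef
  set B := ((((eX G u v) ×ˢ (eZ G u v)).filter fun p => G.Adj p.1 p.2).image
      fun p => ({p.1, p.2} : Finset V)) with hBdef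
  set C := ((((eY G u v) ×ˢ (eZ G u v)).filter fun p => G.Adj p.1 p.2).image
      fun p => ({p.1, p.2} : Finset V)) with hCdef
  set M := ((((eZ G u v) ×ˢ (eZ G u v)).filter fun p => G.Adj p.1 p.2).image
      fun p => ({p.1, p.2} : Finset V)) with hMdef
  have hBm : mE G (eX G u v) (eZ G u v) = B.card := by rw [hBdef]; rfl
  have hCm : mE G (eY G u v) (eZ G u v) = C.card := by rw [hCdef]; rfl
  have hMm : mE G (eZ G u v) (eZ G u v) = M.card := by rw [hMdef]; rfl
  have dAB : Disjoint A B := by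
    refine Finset.disjoint_left.mpr ?_
    intro s hA hB
    rw [hAdef] at hA
    rw [hBdef] at hB
    simp only [Finset.mem_image, Finset.mem_filter, Finset.mem_product, Finset.mem_univ,
      true_and, eX, eY, eZ, Prod.exists] at hA hB
    obtain ⟨z1,z2,⟨⟨⟨hz1u,hz1v⟩,hz2u,hz2v⟩,hne,hnadj⟩,hs1⟩ := hA
    obtain ⟨x,z,⟨⟨⟨hxv,hxu,hxnv⟩,hzu,hzv⟩,hadj⟩,hs2⟩ := hB
    rcases pair_eq' (hs1.trans hs2.symm) hne with ⟨rfl,rfl⟩|⟨rfl,rfl⟩ <;> tauto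
  have dAC : Disjoint A C := by
    refine Finset.disjoint_left.mpr ?_
    intro s hA hC
    rw [hAdef] at hA
    rw [hCdef] at hC
    simp only [Finset.mem_image, Finset.mem_filter, Finset.mem_product, Finset.mem_univ,
      true_and, eX, eY, eZ, Prod.exists] at hA hC
    obtain ⟨z1,z2,⟨⟨⟨hz1u,hz1v⟩,hz2u,hz2v⟩,hne,hnadj⟩,hs1⟩ := hA
    obtain ⟨y,z,⟨⟨⟨hyu,hyv,hynu⟩,hzu,hzv⟩,hadj⟩,hs2⟩ := hC
    rcases pair_eq' (hs1.trans hs2.symm) hne with ⟨rfl,rfl⟩|⟨rfl,rfl⟩ <;> tauto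
  have dBC : Disjoint B C := by
    refine Finset.disjoint_left.mpr ?_
    intro s hB hC
    rw [hBdef] at hB
    rw [hCdef] at hC
    simp only [Finset.mem_image, Finset.mem_filter, Finset.mem_product, Finset.mem_univ,
      true_and, eX, eY, eZ, Prod.exists] at hB hC
    obtain ⟨x,z,⟨⟨⟨hxv,hxu,hxnv⟩,hzu,hzv⟩,hadj⟩,hs1⟩ := hB
    obtain ⟨y,z',⟨⟨⟨hyu,hyv,hynu⟩,hz'u,hz'v⟩,hadj'⟩,hs2⟩ := hC
    rcases pair_eq' (hs1.trans hs2.symm) hadj.ne with ⟨rfl,rfl⟩|⟨rfl,rfl⟩ <;> tauto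
  have dAM : Disjoint A M := by
    refine Finset.disjoint_left.mpr ?_
    intro s hA hM
    rw [hAdef] at hA
    rw [hMdef] at hM
    simp only [Finset.mem_image, Finset.mem_filter, Finset.mem_product, Finset.mem_univ,
      true_and, eZ, Prod.exists] at hA hM
    obtain ⟨z1,z2,⟨⟨hz1,hz2⟩,hne,hnadj⟩,hs1⟩ := hA
    obtain ⟨w1,w2,⟨⟨hw1,hw2⟩,hadj⟩,hs2⟩ := hM
    rcases pair_eq' (hs1.trans hs2.symm) hne with ⟨rfl,rfl⟩|⟨rfl,rfl⟩
    · exact hnadj hadj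
    · exact hnadj hadj.symm
  have hU : A ∪ M = (eZ G u v).powersetCard 2 := by
    rw [hAdef, hMdef]
    ext s
    simp only [Finset.mem_union, Finset.mem_image, Finset.mem_filter, Finset.mem_product,
      Prod.exists, Finset.mem_powersetCard]
    constructor
    · rintro (⟨z1,z2,⟨⟨hz1,hz2⟩,hne,hnadj⟩,rfl⟩|⟨z1,z2,⟨⟨hz1,hz2⟩,hadj⟩,rfl⟩)
      · exact ⟨Finset.insert_subset hz1 (Finset.singleton_subset_iff.mpr hz2),
          Finset.card_pair hne⟩
      · exact ⟨Finset.insert_subset hz1 (Finset.singleton_subset_iff.mpr hz2),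
          Finset.card_pair hadj.ne⟩
    · rintro ⟨hsub, hcard⟩
      obtain ⟨z1,z2,hne,rfl⟩ := Finset.card_eq_two.mp hcard
      have hz1 : z1 ∈ eZ G u v := hsub (by simp)
      have hz2 : z2 ∈ eZ G u v := hsub (by simp)
      by_cases hadj : G.Adj z1 z2
      · exact Or.inr ⟨z1,z2,⟨⟨hz1,hz2⟩,hadj⟩,rfl⟩
      · exact Or.inl ⟨z1,z2,⟨⟨hz1,hz2⟩,hne,hadj⟩,rfl⟩
  have hAcard : A.card + M.card = ((eZ G u v).card).choose 2 := by
    rw [← Finset.card_union_of_disjoint dAM, hU, Finset.card_powersetCard]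
  rw [Finset.card_union_of_disjoint (Finset.disjoint_union_left.mpr ⟨dAC, dBC⟩),
    Finset.card_union_of_disjoint dAB, hBm, hCm, hMm]
  push_cast
  omega
end

section
/- Let e={u,v} be an edge of a finite simple undirected graph G. The number of unordered pairs {v1,v2} ⊆ adj({u,v}) such that the subgraph induced on {u,v,v1,v2} is a 4-cycle (an induced C4 containing the edge {u,v}) equals m(X,Y) (Theorem 2, Table 3, C4 row). -/
open Finset

variable {V : Type*}

/-- Core case for cycle extraction: the cycle is `u - v - c - d - u`. -/
lemma core_aux [DecidableEq V] {G : SimpleGraph V} {u v p q c d : V}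
    (hpu : p ≠ u) (hpv : p ≠ v) (hqu : q ≠ u) (hqv : q ≠ v) (hpq : p ≠ q)
    (hset : ({u, v, c, d} : Finset V) = {u, v, p, q})
    (hbc : G.Adj v c) (hcd : G.Adj c d) (hda : G.Adj d u)
    (hac : ¬ G.Adj u c) (hbd : ¬ G.Adj v d) :
    (G.Adj u p ∧ ¬ G.Adj v p ∧ G.Adj v q ∧ ¬ G.Adj u q ∧ G.Adj p q) ∨
    (G.Adj u q ∧ ¬ G.Adj v q ∧ G.Adj v p ∧ ¬ G.Adj u p ∧ G.Adj q p) := by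
  have hp : p = c ∨ p = d := by
    have : p ∈ ({u, v, c, d} : Finset V) := hset.symm ▸ (by simp)
    simp only [mem_insert, mem_singleton] at this
    tauto
  have hq : q = c ∨ q = d := by
    have : q ∈ ({u, v, c, d} : Finset V) := hset.symm ▸ (by simp)
    simp only [mem_insert, mem_singleton] at this
    tauto
  rcases hp with rfl | rfl
  · rcases hq with rfl | rfl
    · exact absurd rfl hpq
    · exact Or.inr ⟨hda.symm, hbd, hbc, hac, hcd.symm⟩
  · rcases hq with rfl | rfl
    · exact Or.inl ⟨hda.symm, hbd, hbc, hac, hcd.symm⟩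
    · exact absurd rfl hpq

/-- Extraction lemma: from an induced 4-cycle on `{u,v,p,q}` with edge `u v`. -/
lemma extract_aux [DecidableEq V] {G : SimpleGraph V} {u v p q a b c d : V}
    (huv : G.Adj u v) (hpu : p ≠ u) (hpv : p ≠ v) (hqu : q ≠ u) (hqv : q ≠ v) (hpq : p ≠ q)
    (hset : ({a, b, c, d} : Finset V) = {u, v, p, q})
    (hab : G.Adj a b) (hbc : G.Adj b c) (hcd : G.Adj c d) (hda : G.Adj d a)
    (hac : ¬ G.Adj a c) (hbd : ¬ G.Adj b d) :
    (G.Adj u p ∧ ¬ G.Adj v p ∧ G.Adj v q ∧ ¬ G.Adj u q ∧ G.Adj p q) ∨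
    (G.Adj u q ∧ ¬ G.Adj v q ∧ G.Adj v p ∧ ¬ G.Adj u p ∧ G.Adj q p) := by
  have main : ∀ a b c d : V, ({a, b, c, d} : Finset V) = {u, v, p, q} →
      G.Adj a b → G.Adj b c → G.Adj c d → G.Adj d a → ¬ G.Adj a c → ¬ G.Adj b d →
      a = u →
      (G.Adj u p ∧ ¬ G.Adj v p ∧ G.Adj v q ∧ ¬ G.Adj u q ∧ G.Adj p q) ∨
      (G.Adj u q ∧ ¬ G.Adj v q ∧ G.Adj v p ∧ ¬ G.Adj u p ∧ G.Adj q p) := by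
    rintro a b c d hset hab hbc hcd hda hac hbd rfl
    have hv : v = b ∨ v = c ∨ v = d := by
      have : v ∈ ({a, b, c, d} : Finset V) := hset.symm ▸ (by simp)
      simp only [mem_insert, mem_singleton] at this
      rcases this with rfl | h
      · exact absurd rfl huv.ne'
      · exact h
    rcases hv with rfl | rfl | rfl
    · exact core_aux hpu hpv hqu hqv hpq hset hbc hcd hda hac hbd
    · exact absurd huv hac
    · refine core_aux hpu hpv hqu hqv hpq ?_ hcd.symm hbc.symm hab.symm hac
        (fun h => hbd h.symm)
      rw [← hset]; ext x; simp; tauto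
  have hu : u = a ∨ u = b ∨ u = c ∨ u = d := by
    have : u ∈ ({a, b, c, d} : Finset V) := hset.symm ▸ (by simp)
    simpa using this
  rcases hu with h | h | h | h
  · exact main a b c d hset hab hbc hcd hda hac hbd h.symm
  · refine main b c d a ?_ hbc hcd hda hab hbd (fun h => hac h.symm) h.symm
    rw [← hset]; ext x; simp; tauto
  · refine main c d a b ?_ hcd hda hab hbc (fun h => hac h.symm) (fun h => hbd h.symm) h.symm
    rw [← hset]; ext x; simp; tauto
  · refine main d a b c ?_ hda hab hbc hcd (fun h => hbd h.symm) hac h.symm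
    rw [← hset]; ext x; simp; tauto

lemma mem_adjW_pair [Fintype V] [DecidableEq V] (G : SimpleGraph V) [DecidableRel G.Adj]
    {u v x : V} : x ∈ adjW G {u, v} ↔ x ≠ u ∧ x ≠ v ∧ (G.Adj x u ∨ G.Adj x v) := by
  simp [adjW]
  tauto

/-- Theorem 2, Table 3, `C₄` row: the number of unordered pairs `{v₁,v₂} ⊆ adj({u,v})` such
that the induced subgraph on `{u,v,v₁,v₂}` is a 4-cycle equals `m(X,Y)`. -/
theorem stmt11 [Fintype V] [DecidableEq V] (G : SimpleGraph V) [DecidableRel G.Adj]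
    (u v : V) (huv : G.Adj u v) :
    ((((adjW G {u, v}) ×ˢ (adjW G {u, v})).filter fun p =>
        p.1 ≠ p.2 ∧
        ∃ a b c d : V, ({a, b, c, d} : Finset V) = {u, v, p.1, p.2} ∧
          G.Adj a b ∧ G.Adj b c ∧ G.Adj c d ∧ G.Adj d a ∧ ¬ G.Adj a c ∧ ¬ G.Adj b d).image
      fun p => ({p.1, p.2} : Finset V)).card
      = mE G (eX G u v) (eY G u v) := by
  unfold mE
  congr 1
  ext s
  simp only [mem_image, mem_filter, mem_product, Prod.exists, eX, eY, mem_univ, true_and]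
  constructor
  · rintro ⟨x, y, ⟨⟨hx, hy⟩, hne, a, b, c, d, hset, hab, hbc, hcd, hda, hac, hbd⟩, rfl⟩
    rw [mem_adjW_pair] at hx hy
    rcases extract_aux huv hx.1 hx.2.1 hy.1 hy.2.1 hne hset hab hbc hcd hda hac hbd with
      ⟨h1, h2, h3, h4, h5⟩ | ⟨h1, h2, h3, h4, h5⟩
    · exact ⟨x, y, ⟨⟨⟨hx.2.1, h1, h2⟩, hy.1, h3, h4⟩, h5⟩, rfl⟩
    · exact ⟨y, x, ⟨⟨⟨hy.2.1, h1, h2⟩, hx.1, h3, h4⟩, h5⟩, Finset.pair_comm y x⟩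
  · rintro ⟨x, y, ⟨⟨⟨hxv, hux, hvx⟩, hyu, hvy, huy⟩, hxy⟩, rfl⟩
    have hxu : x ≠ u := hux.ne'
    have hyv : y ≠ v := hvy.ne'
    have hne : x ≠ y := fun h => hvx (h ▸ hvy)
    refine ⟨x, y, ⟨⟨?_, ?_⟩, hne, u, v, y, x, ?_, huv, hvy, hxy.symm, hux.symm, huy, hvx⟩, rfl⟩
    · exact (mem_adjW_pair G).2 ⟨hxu, hxv, Or.inl hux.symm⟩
    · exact (mem_adjW_pair G).2 ⟨hyu, hyv, Or.inr hvy.symm⟩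
    · ext z; simp; tauto
end

section
/- Let G be a finite simple undirected graph and suppose the subgraph induced on five vertices {v1,v2,v3,v4,v5} is the 5-cycle v1–v2–v3–v4–v5–v1. Then the number of 3-element subsets S of {v1,...,v5} such that the subgraph induced on S is a path on 3 vertices and both of the two remaining vertices belong to adj(S) equals exactly 5 (namely S ranges over the 5 sets of three consecutive cycle vertices); hence an induced C5 is counted in exactly 5 P3-Patterns and its final counter must be divided by 5. -/
open Finset

variable {V : Type*}

/-!
The map `i ↦ vᵢ` from `Fin 5` is an induced embedding of the cycle `C₅` into `G`; it is injective
because distinct vertices of `C₅` have distinct neighbourhoods. Inducing a `P₃` and dominating the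
rest of the vertex set are both transported along induced embeddings, so the count equals the same
count in `C₅` itself, which is `5` by direct computation.
-/

open SimpleGraph Function

theorem SimpleGraph.injective_of_adj_iff {W : Type*} {G : SimpleGraph V} {H : SimpleGraph W}
    {f : W → V} (hH : Injective H.neighborSet) (hf : ∀ i j, G.Adj (f i) (f j) ↔ H.Adj i j) :
    Injective f := by
  intro i j hij
  apply hH
  ext k
  simp only [mem_neighborSet, ← hf, hij]

theorem cycleGraph_five_neighborSet_injective : Injective (cycleGraph 5).neighborSet := by
  intro i j hij
  have hadj : ∀ k, (cycleGraph 5).Adj i k ↔ (cycleGraph 5).Adj j k := Set.ext_iff.1 hij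
  clear hij
  revert i j
  decide

section DominatingP3

variable [DecidableEq V] {W : Type*} [DecidableEq W]

def IsInducedP3 (G : SimpleGraph V) (S : Finset V) : Prop :=
  ∃ x y z : V, ({x, y, z} : Finset V) = S ∧ G.Adj x y ∧ G.Adj y z ∧ ¬ G.Adj x z

instance [Fintype V] (G : SimpleGraph V) [DecidableRel G.Adj] : DecidablePred (IsInducedP3 G) :=
  fun _ => by unfold IsInducedP3; infer_instance

def dominatingInducedP3s [Fintype V] (G : SimpleGraph V) [DecidableRel G.Adj] (U : Finset V) :
    Finset (Finset V) :=
  (U.powersetCard 3).filter fun S => IsInducedP3 G S ∧ ∀ w ∈ U \ S, w ∈ adjW G S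

variable {G : SimpleGraph V} {H : SimpleGraph W}

theorem isInducedP3_map_iff (f : H ↪g G) (S : Finset W) :
    IsInducedP3 G (S.map f.toEmbedding) ↔ IsInducedP3 H S := by
  constructor
  · rintro ⟨x, y, z, hxyz, hxy, hyz, hxz⟩
    have hmem : ∀ v ∈ ({x, y, z} : Finset V), ∃ i ∈ S, f i = v := by
      intro v hv
      simpa [hxyz] using hv
    obtain ⟨a, -, rfl⟩ := hmem x (by simp)
    obtain ⟨b, -, rfl⟩ := hmem y (by simp)
    obtain ⟨c, -, rfl⟩ := hmem z (by simp)
    refine ⟨a, b, c, map_injective f.toEmbedding ?_, f.map_adj_iff.1 hxy, f.map_adj_iff.1 hyz,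
      fun hac => hxz (f.map_adj_iff.2 hac)⟩
    simpa [map_insert] using hxyz
  · rintro ⟨a, b, c, rfl, hab, hbc, hac⟩
    exact ⟨f a, f b, f c, by simp [map_insert], f.map_adj_iff.2 hab, f.map_adj_iff.2 hbc,
      fun h => hac (f.map_adj_iff.1 h)⟩

variable [Fintype V] [Fintype W] [DecidableRel G.Adj] [DecidableRel H.Adj]

theorem map_mem_adjW_map_iff (f : H ↪g G) (S : Finset W) (i : W) :
    f i ∈ adjW G (S.map f.toEmbedding) ↔ i ∈ adjW H S := by
  simp [adjW]

theorem dominatingInducedP3s_map (f : H ↪g G) (U : Finset W) :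
    dominatingInducedP3s G (U.map f.toEmbedding) =
      (dominatingInducedP3s H U).map (mapEmbedding f.toEmbedding).toEmbedding := by
  rw [dominatingInducedP3s, powersetCard_map, filter_map, dominatingInducedP3s]
  congr 1
  refine filter_congr fun S _ => ?_
  simp only [comp_apply, RelEmbedding.coe_toEmbedding, mapEmbedding_apply, isInducedP3_map_iff,
    ← Finset.map_sdiff, forall_mem_map, map_mem_adjW_map_iff]

theorem card_dominatingInducedP3s_cycleGraph_five :
    (dominatingInducedP3s (cycleGraph 5) univ).card = 5 := by
  decide

end DominatingP3

theorem stmt19_general [Fintype V] [DecidableEq V] (G : SimpleGraph V) [DecidableRel G.Adj]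
    (v₁ v₂ v₃ v₄ v₅ : V)
    (h12 : G.Adj v₁ v₂) (h23 : G.Adj v₂ v₃) (h34 : G.Adj v₃ v₄) (h45 : G.Adj v₄ v₅)
    (h51 : G.Adj v₅ v₁)
    (h13 : ¬ G.Adj v₁ v₃) (h14 : ¬ G.Adj v₁ v₄) (h24 : ¬ G.Adj v₂ v₄)
    (h25 : ¬ G.Adj v₂ v₅) (h35 : ¬ G.Adj v₃ v₅) :
    ((({v₁, v₂, v₃, v₄, v₅} : Finset V).powersetCard 3).filter fun S =>
        (∃ x y z : V, ({x, y, z} : Finset V) = S ∧ G.Adj x y ∧ G.Adj y z ∧ ¬ G.Adj x z) ∧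
        ∀ w ∈ ({v₁, v₂, v₃, v₄, v₅} : Finset V) \ S, w ∈ adjW G S).card = 5 := by
  let f : Fin 5 → V := ![v₁, v₂, v₃, v₄, v₅]
  have hf : ∀ i j, G.Adj (f i) (f j) ↔ (cycleGraph 5).Adj i j := by
    intro i j
    fin_cases i <;> fin_cases j <;>
      simp [f, h12, h23, h34, h45, h51, h12.symm, h23.symm, h34.symm, h45.symm, h51.symm,
        h13, h14, h24, h25, h35, mt G.adj_symm h13, mt G.adj_symm h14, mt G.adj_symm h24,
        mt G.adj_symm h25, mt G.adj_symm h35] <;> decide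
  let e : cycleGraph 5 ↪g G :=
    ⟨⟨f, injective_of_adj_iff cycleGraph_five_neighborSet_injective hf⟩, hf _ _⟩
  have hU : ({v₁, v₂, v₃, v₄, v₅} : Finset V) = univ.map e.toEmbedding := by
    ext v
    simp [e, f, Fin.exists_fin_succ, eq_comm]
  change (dominatingInducedP3s G _).card = 5
  rw [hU, dominatingInducedP3s_map, card_map, card_dominatingInducedP3s_cycleGraph_five]

/-- If `{v₁,…,v₅}` induces the 5-cycle `v₁–v₂–v₃–v₄–v₅–v₁`, then exactly 5 of its 3-element
vertex subsets `S` induce a path on 3 vertices with both remaining vertices in `adj(S)`;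
hence an induced `C₅` is counted in exactly 5 `P₃`-Patterns. -/
theorem stmt19 [Fintype V] [DecidableEq V] (G : SimpleGraph V) [DecidableRel G.Adj]
    (v₁ v₂ v₃ v₄ v₅ : V) (hcard : ({v₁, v₂, v₃, v₄, v₅} : Finset V).card = 5)
    (h12 : G.Adj v₁ v₂) (h23 : G.Adj v₂ v₃) (h34 : G.Adj v₃ v₄) (h45 : G.Adj v₄ v₅)
    (h51 : G.Adj v₅ v₁)
    (h13 : ¬ G.Adj v₁ v₃) (h14 : ¬ G.Adj v₁ v₄) (h24 : ¬ G.Adj v₂ v₄)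
    (h25 : ¬ G.Adj v₂ v₅) (h35 : ¬ G.Adj v₃ v₅) :
    ((({v₁, v₂, v₃, v₄, v₅} : Finset V).powersetCard 3).filter fun S =>
        (∃ x y z : V, ({x, y, z} : Finset V) = S ∧ G.Adj x y ∧ G.Adj y z ∧ ¬ G.Adj x z) ∧
        ∀ w ∈ ({v₁, v₂, v₃, v₄, v₅} : Finset V) \ S, w ∈ adjW G S).card = 5 :=
  stmt19_general G v₁ v₂ v₃ v₄ v₅ h12 h23 h34 h45 h51 h13 h14 h24 h25 h35
end
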